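/- arXiv:1802.08592 — 9 statements merged into one kernel-verified Lean document; each statement's English description precedes it below -/
import Mathlib

section
/- Let U be an ultrafilter on ℕ and let γ, γ' : ℕ → ℕ with γ'_n ≥ 1 for all n and with γ_n/γ'_n → 0 along U. For each n let X_n be a finite set, E'_n ⊆ X_n a subset with |E'_n| = γ'_n, and ξ_n = (γ'_n)^{-1/2}·χ_{E'_n} ∈ l²(X_n). Then for every k ∈ ℕ, every sequence of functions η_n : X_n → ℂ with |supp η_n| ≤ k·γ_n for all n, and every ε > 0, the set {n ∈ ℕ : ‖ξ_n − η_n‖² > 1 − ε} belongs to U. In particular, ‖ξ_n − η_n‖ does not converge to 0 along U. -/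
open Filter Topology

/-!
Off the support of `η_n`, `ξ_n - η_n` agrees with `ξ_n`, and at least `γ'_n - k γ_n` points of
`E'_n` lie off that support, each contributing `1 / γ'_n` to `‖ξ_n - η_n‖²`. Hence
`‖ξ_n - η_n‖² ≥ 1 - k γ_n / γ'_n`, and the right-hand side tends to `1` along `U`.
-/

lemma card_sub_ncard_support_le_card_filter_eq_zero {X M : Type*} [Zero M] [DecidableEq M]
    (s : Finset X) (η : X → M) (hη : (Function.support η).Finite) :
    (s.card : ℝ) - (Function.support η).ncard ≤ (s.filter (η · = 0)).card := by
  have hsplit : (s.card : ℝ) = (s.filter (η · = 0)).card + (s.filter (¬η · = 0)).card := by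
    exact_mod_cast (Finset.card_filter_add_card_filter_not (s := s) _).symm
  have hsupp : ((s.filter (¬η · = 0)).card : ℝ) ≤ (Function.support η).ncard := by
    exact_mod_cast (Set.ncard_coe_finset (s.filter (¬η · = 0))).symm.trans_le
      (Set.ncard_le_ncard (fun x hx => (Finset.mem_filter.1 hx).2) hη)
  linarith

lemma card_sub_mul_norm_sq_le_sum_norm_sub_sq {X E : Type*} [Fintype X] [SeminormedAddCommGroup E]
    (s : Finset X) (c : E) (ξ η : X → E) (hξ : ∀ x ∈ s, ξ x = c) (m : ℕ)
    (hη : (Function.support η).ncard ≤ m) :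
    ((s.card : ℝ) - m) * ‖c‖ ^ 2 ≤ ∑ x, ‖ξ x - η x‖ ^ 2 := by
  classical
  set t := s.filter (η · = 0)
  have hcard : (s.card : ℝ) - m ≤ t.card := by
    have := card_sub_ncard_support_le_card_filter_eq_zero s η (Set.toFinite _)
    have : ((Function.support η).ncard : ℝ) ≤ m := by exact_mod_cast hη
    linarith
  have hterm : ∀ x ∈ t, ‖ξ x - η x‖ ^ 2 = ‖c‖ ^ 2 := by
    intro x hx
    obtain ⟨hxs, hηx⟩ := Finset.mem_filter.1 hx
    rw [hηx, sub_zero, hξ x hxs]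
  calc ((s.card : ℝ) - m) * ‖c‖ ^ 2 ≤ t.card * ‖c‖ ^ 2 := by gcongr
    _ = ∑ x ∈ t, ‖ξ x - η x‖ ^ 2 := by
      rw [Finset.sum_congr rfl hterm, Finset.sum_const, nsmul_eq_mul]
    _ ≤ ∑ x, ‖ξ x - η x‖ ^ 2 :=
      Finset.sum_le_sum_of_subset_of_nonneg t.subset_univ fun _ _ _ => by positivity

lemma not_tendsto_sqrt_nhds_zero_of_eventually_lt {α : Type*} {l : Filter α} [l.NeBot]
    {f : α → ℝ} {a : ℝ} (ha : 0 < a) (hf : ∀ᶠ n in l, a < f n) :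
    ¬Tendsto (fun n => √(f n)) l (𝓝 0) := fun hlim => by
  obtain ⟨n, hlt, hsqrt⟩ :=
    (hf.and (hlim.eventually (gt_mem_nhds (Real.sqrt_pos.2 ha)))).exists
  exact (Real.sqrt_lt_sqrt ha.le hlt).not_gt hsqrt

/-- With γ_n/γ'_n → 0 along an ultrafilter U, ξ_n the normalized
indicator of a set E'_n of size γ'_n, and η_n supported on at most k·γ_n points,
the set {n : ‖ξ_n − η_n‖² > 1 − ε} belongs to U for every ε > 0; in particular
‖ξ_n − η_n‖ does not tend to 0 along U. -/
theorem stmt_1 (U : Ultrafilter ℕ) (γ γ' : ℕ → ℕ) (hγ'1 : ∀ n, 1 ≤ γ' n)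
    (hratio : Tendsto (fun n => (γ n : ℝ) / (γ' n : ℝ)) (U : Filter ℕ) (nhds 0))
    (X : ℕ → Type*) [∀ n, Fintype (X n)] [∀ n, DecidableEq (X n)]
    (E' : ∀ n, Finset (X n)) (hE' : ∀ n, (E' n).card = γ' n)
    (ξ : ∀ n, X n → ℂ)
    (hξ : ∀ n x, ξ n x = if x ∈ E' n then ((Real.sqrt (γ' n))⁻¹ : ℂ) else 0) :
    ∀ (k : ℕ) (η : ∀ n, X n → ℂ),
      (∀ n, (Function.support (η n)).ncard ≤ k * γ n) →
      (∀ ε : ℝ, 0 < ε →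
        {n : ℕ | 1 - ε < ∑ x, ‖ξ n x - η n x‖ ^ 2} ∈ U) ∧
      ¬ Tendsto (fun n => Real.sqrt (∑ x, ‖ξ n x - η n x‖ ^ 2))
          (U : Filter ℕ) (nhds 0) := by
  intro k η hη
  have hlower (n : ℕ) : 1 - k * (γ n / γ' n : ℝ) ≤ ∑ x, ‖ξ n x - η n x‖ ^ 2 := by
    have hγ' : (0 : ℝ) < γ' n := by exact_mod_cast hγ'1 n
    have hnorm : ‖((√(γ' n : ℝ))⁻¹ : ℂ)‖ ^ 2 = (γ' n : ℝ)⁻¹ := by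
      rw [norm_inv, Complex.norm_real, Real.norm_of_nonneg (Real.sqrt_nonneg _), inv_pow,
        Real.sq_sqrt hγ'.le]
    have := card_sub_mul_norm_sq_le_sum_norm_sub_sq (E' n) _ (ξ n) (η n)
      (fun x hx => by rw [hξ, if_pos hx]) (k * γ n) (hη n)
    rw [hnorm, hE'] at this
    convert this using 1
    push_cast
    field_simp
  have hsmall : Tendsto (fun n => k * (γ n / γ' n : ℝ)) U (𝓝 0) := by
    simpa using hratio.const_mul (k : ℝ)
  have hlarge (ε : ℝ) (hε : 0 < ε) : ∀ᶠ n in (U : Filter ℕ), 1 - ε < ∑ x, ‖ξ n x - η n x‖ ^ 2 :=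
    (hsmall.eventually (gt_mem_nhds hε)).mono fun n hn => by linarith [hlower n]
  exact ⟨hlarge, not_tendsto_sqrt_nhds_zero_of_eventually_lt one_half_pos
    ((hlarge _ one_half_pos).mono fun n hn => by linarith)⟩
end

section
/- Let U be an ultrafilter on ℕ and let α, γ⁰ : ℕ → ℕ with γ⁰_n ≥ 1 for all n. Suppose that for every γ : ℕ → ℕ such that γ_n/γ⁰_n → ∞ along U (i.e., Tendsto of the ratio along U to atTop), there exist k ∈ ℕ and A ∈ U with α_n ≤ k·γ_n for all n ∈ A. Then there exist C ∈ ℕ and A ∈ U with α_n ≤ C·γ⁰_n for all n ∈ A. -/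
open Filter

/-- If for every γ with γ_n/γ0_n → ∞ along U there are k and A ∈ U
with α_n ≤ k·γ_n on A, then there are C and A ∈ U with α_n ≤ C·γ0_n on A. -/
theorem stmt_3 (U : Ultrafilter ℕ) (α γ0 : ℕ → ℕ) (hγ0 : ∀ n, 1 ≤ γ0 n)
    (h : ∀ γ : ℕ → ℕ,
      Tendsto (fun n => (γ n : ℝ) / (γ0 n : ℝ)) (U : Filter ℕ) atTop →
      ∃ (k : ℕ) (A : Set ℕ), A ∈ U ∧ ∀ n ∈ A, α n ≤ k * γ n) :
    ∃ (C : ℕ) (A : Set ℕ), A ∈ U ∧ ∀ n ∈ A, α n ≤ C * γ0 n := by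
  by_contra hc
  push_neg at hc
  have key : ∀ C : ℕ, {n | C * γ0 n < α n} ∈ U := by
    intro C
    have hnot : {n | α n ≤ C * γ0 n} ∉ U := by
      intro hmem
      obtain ⟨n, hn, hn'⟩ := hc C _ hmem
      exact absurd hn (not_le.mpr hn')
    have := (Ultrafilter.compl_mem_iff_notMem (s := {n | α n ≤ C * γ0 n})).mpr hnot
    convert this using 1
    ext n
    simp [not_le]
  set γ : ℕ → ℕ := fun n => Nat.sqrt (α n * γ0 n) with hγ
  have htend : Tendsto (fun n => (γ n : ℝ) / (γ0 n : ℝ)) (U : Filter ℕ) atTop := by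
    rw [tendsto_atTop]
    intro M
    filter_upwards [key (⌈M⌉₊ ^ 2)] with n hn
    have h1 : ⌈M⌉₊ * γ0 n ≤ γ n := by
      have : (⌈M⌉₊ * γ0 n) ^ 2 ≤ α n * γ0 n := by
        have : ⌈M⌉₊ ^ 2 * γ0 n ≤ α n := le_of_lt hn
        nlinarith [hγ0 n]
      calc ⌈M⌉₊ * γ0 n = Nat.sqrt ((⌈M⌉₊ * γ0 n) ^ 2) :=
            (Nat.sqrt_eq' _).symm
        _ ≤ γ n := Nat.sqrt_le_sqrt this
    have hγ0' : (0:ℝ) < (γ0 n : ℝ) := by exact_mod_cast hγ0 n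
    rw [le_div_iff₀ hγ0']
    calc M * (γ0 n : ℝ) ≤ (⌈M⌉₊ : ℝ) * (γ0 n : ℝ) := by
          gcongr; exact Nat.le_ceil M
      _ ≤ (γ n : ℝ) := by exact_mod_cast h1
  obtain ⟨k, A, hA, hk⟩ := h γ htend
  have hmem : A ∩ {n | k ^ 2 * γ0 n < α n} ∈ U := (U : Filter ℕ).inter_mem hA (key (k ^ 2))
  obtain ⟨n, hnA, hn⟩ := (U : Filter ℕ).nonempty_of_mem hmem
  have h2 : α n ≤ k * γ n := hk n hnA
  have h3 : γ n ^ 2 ≤ α n * γ0 n := Nat.sqrt_le' _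
  have hpos : 0 < α n := lt_of_le_of_lt (Nat.zero_le _) hn
  have h5 : α n * α n ≤ (k ^ 2 * γ0 n) * α n := by
    calc α n * α n ≤ (k * γ n) * (k * γ n) := Nat.mul_le_mul h2 h2
      _ = k ^ 2 * (γ n ^ 2) := by ring
      _ ≤ k ^ 2 * (α n * γ0 n) := Nat.mul_le_mul_left _ h3
      _ = (k ^ 2 * γ0 n) * α n := by ring
  have h6 : (k ^ 2 * γ0 n) * α n < α n * α n := Nat.mul_lt_mul_of_pos_right hn hpos
  omega
end

section
/- Let U be an ultrafilter on ℕ, let ν : ℕ → ℕ with ν_n ≥ 1, and set X_n = Fin (ν_n). Let ξ_n : X_n → ℂ be functions with sup_n ‖ξ_n‖ < ∞, and let γ⁰ : ℕ → ℕ with γ⁰_n ≥ 1. Assume: for every γ : ℕ → ℕ such that γ_n/γ⁰_n → ∞ along U and for every ε > 0, there exist k ∈ ℕ and functions ζ_n : X_n → ℂ such that |supp ζ_n| ≤ k·γ_n for all n and {n : ‖ξ_n − ζ_n‖ < ε} ∈ U. Then for every ε > 0 there exist C ∈ ℕ and functions η_n : X_n → ℂ such that |supp η_n| ≤ C·γ⁰_n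 for all n and {n : ‖ξ_n − η_n‖ < ε} ∈ U. -/
open Filter

/-! Along an ultrafilter, a sequence that is unbounded tends to infinity. Hence if the least
sparsity level `m n` at which `ξ n` is `ε`-approximable were unbounded along `U`, the scale
`γ n = √(m n) · γ0 n` would satisfy `γ / γ0 → ∞`, and the hypothesis would give approximations
with support `k √(m n) γ0 n < m n γ0 n`, contradicting the minimality of `m n`. -/

namespace Ultrafilter

variable {α : Type*} (U : Ultrafilter α)

theorem exists_eventually_le_of_forall_tendsto (m : α → ℕ)
    (h : ∀ f : α → ℕ, Tendsto f (U : Filter α) atTop → ∃ k, ∀ᶠ a in (U : Filter α), m a ≤ k * f a) :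
    ∃ C, ∀ᶠ a in (U : Filter α), m a ≤ C := by
  by_contra! hm
  have hm_tendsto : Tendsto m (U : Filter α) atTop :=
    tendsto_atTop.2 fun C => (hm C).mono fun _ => le_of_lt
  have hsqrt : Tendsto Nat.sqrt atTop atTop :=
    tendsto_atTop_atTop.2 fun b => ⟨b * b, fun _ hx => Nat.le_sqrt.2 hx⟩
  obtain ⟨k, hk⟩ := h _ (hsqrt.comp hm_tendsto)
  obtain ⟨a, hle, hlarge⟩ :=
    (hk.and (hm_tendsto.eventually_ge_atTop ((k + 1) * (k + 1)))).exists
  have hk_lt : k < Nat.sqrt (m a) := Nat.le_sqrt.2 hlarge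
  have : m a < m a :=
    calc m a ≤ k * Nat.sqrt (m a) := hle
      _ < Nat.sqrt (m a) * Nat.sqrt (m a) := Nat.mul_lt_mul_of_pos_right hk_lt (by omega)
      _ ≤ m a := Nat.sqrt_le (m a)
  exact lt_irrefl _ this

theorem exists_eventually_of_forall_tendsto (P : α → ℕ → Prop)
    (hmono : ∀ a, Monotone (P a)) (hex : ∀ a, ∃ c, P a c)
    (h : ∀ f : α → ℕ, Tendsto f (U : Filter α) atTop → ∃ k, ∀ᶠ a in (U : Filter α), P a (k * f a)) :
    ∃ C, ∀ᶠ a in (U : Filter α), P a C := by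
  classical
  have hP : ∀ a c, P a c ↔ Nat.find (hex a) ≤ c := fun a c =>
    ⟨Nat.find_min' (hex a), fun hc => hmono a hc (Nat.find_spec (hex a))⟩
  simp only [hP] at h ⊢
  exact U.exists_eventually_le_of_forall_tendsto _ h

end Ultrafilter

section ApproxBySupport

variable {ι : Type*} [Fintype ι]

def ApproxBySupport (ξ : ι → ℂ) (s : ℕ) (ε : ℝ) : Prop :=
  ∃ η : ι → ℂ, (Function.support η).ncard ≤ s ∧ Real.sqrt (∑ x, ‖ξ x - η x‖ ^ 2) < ε

theorem ApproxBySupport.mono {ξ : ι → ℂ} {s t : ℕ} {ε : ℝ}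
    (h : ApproxBySupport ξ s ε) (hst : s ≤ t) : ApproxBySupport ξ t ε :=
  let ⟨η, hsupp, hdist⟩ := h
  ⟨η, hsupp.trans hst, hdist⟩

theorem approxBySupport_card (ξ : ι → ℂ) {ε : ℝ} (hε : 0 < ε) :
    ApproxBySupport ξ (Fintype.card ι) ε :=
  ⟨ξ, (Set.ncard_le_ncard (Set.subset_univ _)).trans
    (by rw [Set.ncard_univ, Nat.card_eq_fintype_card]), by simpa using hε⟩

end ApproxBySupport

theorem exists_forall_support_le_of_eventually_approxBySupport {β : Type*} {l : Filter β}
    {ι : β → Type*} [∀ b, Fintype (ι b)] {ξ : ∀ b, ι b → ℂ} {s : β → ℕ} {ε : ℝ}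
    (h : ∀ᶠ b in l, ApproxBySupport (ξ b) (s b) ε) :
    ∃ η : ∀ b, ι b → ℂ, (∀ b, (Function.support (η b)).ncard ≤ s b) ∧
      ∀ᶠ b in l, Real.sqrt (∑ x, ‖ξ b x - η b x‖ ^ 2) < ε := by
  classical
  have hη : ∀ b, ∃ η : ι b → ℂ, (Function.support η).ncard ≤ s b ∧
      (ApproxBySupport (ξ b) (s b) ε → Real.sqrt (∑ x, ‖ξ b x - η x‖ ^ 2) < ε) := fun b =>
    if hb : ApproxBySupport (ξ b) (s b) ε then
      let ⟨η, hsupp, hdist⟩ := hb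
      ⟨η, hsupp, fun _ => hdist⟩
    else ⟨0, by simp, fun h => (hb h).elim⟩
  choose η hη_supp hη_dist using hη
  exact ⟨η, hη_supp, h.mono hη_dist⟩

theorem stmt_4_general (U : Ultrafilter ℕ) (ν : ℕ → ℕ)
    (ξ : ∀ n, Fin (ν n) → ℂ)
    (γ0 : ℕ → ℕ) (hγ0 : ∀ n, 1 ≤ γ0 n)
    (h : ∀ γ : ℕ → ℕ,
      Tendsto (fun n => (γ n : ℝ) / (γ0 n : ℝ)) (U : Filter ℕ) atTop →
      ∀ ε : ℝ, 0 < ε →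
        ∃ (k : ℕ) (ζ : ∀ n, Fin (ν n) → ℂ),
          (∀ n, (Function.support (ζ n)).ncard ≤ k * γ n) ∧
          {n : ℕ | Real.sqrt (∑ x, ‖ξ n x - ζ n x‖ ^ 2) < ε} ∈ U) :
    ∀ ε : ℝ, 0 < ε →
      ∃ (C : ℕ) (η : ∀ n, Fin (ν n) → ℂ),
        (∀ n, (Function.support (η n)).ncard ≤ C * γ0 n) ∧
        {n : ℕ | Real.sqrt (∑ x, ‖ξ n x - η n x‖ ^ 2) < ε} ∈ U := by
  intro ε hε
  have hscale : ∀ f : ℕ → ℕ, Tendsto f (U : Filter ℕ) atTop →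
      ∃ k, ∀ᶠ n in (U : Filter ℕ), ApproxBySupport (ξ n) (k * f n * γ0 n) ε := by
    intro f hf
    have hratio : (fun n => ((f n * γ0 n : ℕ) : ℝ) / γ0 n) = fun n => (f n : ℝ) := by
      ext n
      have : (γ0 n : ℝ) ≠ 0 := by exact_mod_cast Nat.one_le_iff_ne_zero.1 (hγ0 n)
      push_cast
      field_simp
    obtain ⟨k, ζ, hζ, hζU⟩ := h (fun n => f n * γ0 n)
      (hratio ▸ tendsto_natCast_atTop_atTop.comp hf) ε hε
    exact ⟨k, mem_of_superset hζU fun n hn => ⟨ζ n, by rw [mul_assoc]; exact hζ n, hn⟩⟩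
  obtain ⟨C, hC⟩ := U.exists_eventually_of_forall_tendsto
    (fun n c => ApproxBySupport (ξ n) (c * γ0 n) ε)
    (fun n _ _ hcd hc => hc.mono (Nat.mul_le_mul_right _ hcd))
    (fun n => ⟨ν n, (approxBySupport_card (ξ n) hε).mono
      (by simpa using Nat.le_mul_of_pos_right (ν n) (hγ0 n))⟩)
    hscale
  exact ⟨C, exists_forall_support_le_of_eventually_approxBySupport hC⟩

/-- If a bounded sequence ξ_n ∈ l²(Fin (ν n)) can be ε-approximated
(along U) by vectors supported on k·γ_n points for every γ with γ_n/γ0_n → ∞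
along U, then it can be ε-approximated (along U) by vectors supported on
C·γ0_n points. -/
theorem stmt_4 (U : Ultrafilter ℕ) (ν : ℕ → ℕ) (hν : ∀ n, 1 ≤ ν n)
    (ξ : ∀ n, Fin (ν n) → ℂ)
    (hbdd : ∃ B : ℝ, ∀ n, Real.sqrt (∑ x, ‖ξ n x‖ ^ 2) ≤ B)
    (γ0 : ℕ → ℕ) (hγ0 : ∀ n, 1 ≤ γ0 n)
    (h : ∀ γ : ℕ → ℕ,
      Tendsto (fun n => (γ n : ℝ) / (γ0 n : ℝ)) (U : Filter ℕ) atTop →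
      ∀ ε : ℝ, 0 < ε →
        ∃ (k : ℕ) (ζ : ∀ n, Fin (ν n) → ℂ),
          (∀ n, (Function.support (ζ n)).ncard ≤ k * γ n) ∧
          {n : ℕ | Real.sqrt (∑ x, ‖ξ n x - ζ n x‖ ^ 2) < ε} ∈ U) :
    ∀ ε : ℝ, 0 < ε →
      ∃ (C : ℕ) (η : ∀ n, Fin (ν n) → ℂ),
        (∀ n, (Function.support (η n)).ncard ≤ C * γ0 n) ∧
        {n : ℕ | Real.sqrt (∑ x, ‖ξ n x - η n x‖ ^ 2) < ε} ∈ U :=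
  stmt_4_general U ν ξ γ0 hγ0 h
end

section
/- Let G be a group with a symmetric generating set S, let N be a nontrivial normal subgroup of G, let π : G → G/N be the quotient map, and let α = min{l_S(y) : y ∈ N, y ≠ e}. Let R ∈ ℕ with 4R < α. Then for every g ∈ G, the map π restricted to the ball B_R(g) = {h ∈ G : l_S(g⁻¹h) ≤ R} is a bijection onto the ball B̃_R(π(g)) = {x ∈ G/N : l_{π(S)}(π(g)⁻¹·x) ≤ R}, and it preserves distances: for all h, k ∈ B_R(g), l_{π(S)}(π(h)⁻¹π(k)) = l_S(h⁻¹k). -/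
noncomputable def wordLength {G : Type*} [Group G] (S : Set G) (g : G) : ℕ :=
  sInf {n : ℕ | ∃ l : List G, l.length = n ∧ (∀ x ∈ l, x ∈ S) ∧ l.prod = g}

section WL
variable {G : Type*} [Group G] {S : Set G}

lemma wl_le {g : G} {l : List G} (hl : ∀ x ∈ l, x ∈ S) (hp : l.prod = g) :
    wordLength S g ≤ l.length := Nat.sInf_le ⟨l, rfl, hl, hp⟩

lemma exists_word (hsym : S⁻¹ = S) (hgen : Subgroup.closure S = ⊤) (g : G) :
    ∃ l : List G, l.length = wordLength S g ∧ (∀ x ∈ l, x ∈ S) ∧ l.prod = g := by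
  have hg : g ∈ Submonoid.closure S := by
    have : g ∈ (Subgroup.closure S).toSubmonoid := by rw [hgen]; trivial
    rwa [Subgroup.closure_toSubmonoid, Set.union_comm, hsym, Set.union_self] at this
  obtain ⟨l, hl, hp⟩ := Submonoid.exists_list_of_mem_closure hg
  have hne : {n : ℕ | ∃ l : List G, l.length = n ∧ (∀ x ∈ l, x ∈ S) ∧ l.prod = g}.Nonempty :=
    ⟨l.length, l, rfl, hl, hp⟩
  exact Nat.sInf_mem hne

lemma wl_mul (hsym : S⁻¹ = S) (hgen : Subgroup.closure S = ⊤) (g h : G) :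
    wordLength S (g * h) ≤ wordLength S g + wordLength S h := by
  obtain ⟨l, hl, hls, hlp⟩ := exists_word hsym hgen g
  obtain ⟨m, hm, hms, hmp⟩ := exists_word hsym hgen h
  calc wordLength S (g * h) ≤ (l ++ m).length := by
        refine wl_le ?_ (by rw [List.prod_append, hlp, hmp])
        intro x hx; rcases List.mem_append.mp hx with h | h
        exacts [hls x h, hms x h]
    _ = _ := by simp [hl, hm]

lemma wl_inv_le (hsym : S⁻¹ = S) (hgen : Subgroup.closure S = ⊤) (g : G) :
    wordLength S g⁻¹ ≤ wordLength S g := by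
  obtain ⟨l, hl, hls, hlp⟩ := exists_word hsym hgen g
  have : ((l.map Inv.inv).reverse).prod = g⁻¹ := by
    rw [← List.prod_inv_reverse, hlp]
  refine le_trans (wl_le ?_ this) (by simp [hl])
  intro x hx
  simp only [List.mem_reverse, List.mem_map] at hx
  obtain ⟨y, hy, rfl⟩ := hx
  rw [← hsym]; simpa using hls y hy

lemma wl_inv (hsym : S⁻¹ = S) (hgen : Subgroup.closure S = ⊤) (g : G) :
    wordLength S g⁻¹ = wordLength S g :=
  le_antisymm (wl_inv_le hsym hgen g)
    (by simpa using wl_inv_le hsym hgen g⁻¹)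

lemma wl_map {H : Type*} [Group H] (f : G →* H) (hsym : S⁻¹ = S)
    (hgen : Subgroup.closure S = ⊤) (g : G) :
    wordLength (f '' S) (f g) ≤ wordLength S g := by
  obtain ⟨l, hl, hls, hlp⟩ := exists_word hsym hgen g
  refine le_trans (wl_le (l := l.map f) ?_ (by rw [← hlp]; exact (List.prod_hom l f).symm ▸ rfl)) (by simp [hl])
  intro x hx
  simp only [List.mem_map] at hx
  obtain ⟨y, hy, rfl⟩ := hx
  exact ⟨y, hls y hy, rfl⟩

lemma lift_word {H : Type*} [Group H] (f : G →* H) :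
    ∀ l' : List H, (∀ x ∈ l', x ∈ f '' S) →
      ∃ l : List G, l.length = l'.length ∧ (∀ x ∈ l, x ∈ S) ∧ f l.prod = l'.prod := by
  intro l'
  induction l' with
  | nil => exact fun _ => ⟨[], rfl, by simp, by simp⟩
  | cons a t ih =>
    intro h
    obtain ⟨s, hs, hfs⟩ := h a (by simp)
    obtain ⟨l, h1, h2, h3⟩ := ih (fun x hx => h x (by simp [hx]))
    refine ⟨s :: l, by simp [h1], ?_, by simp [h3, hfs]⟩
    intro x hx
    rcases List.mem_cons.mp hx with rfl | hx
    exacts [hs, h2 x hx]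

end WL

/-- If 4R < α = min{l_S(y) : y ∈ N, y ≠ e}, then the quotient map π
restricted to any ball B_R(g) is a distance-preserving bijection onto the ball
B̃_R(π(g)) in G/N. -/
theorem stmt_7 {G : Type*} [Group G] (S : Set G)
    (hsym : S⁻¹ = S) (hgen : Subgroup.closure S = ⊤)
    (N : Subgroup G) [N.Normal] (hN : N ≠ ⊥) (α R : ℕ)
    (hα : α = sInf {m : ℕ | ∃ y : G, y ∈ N ∧ y ≠ 1 ∧ wordLength S y = m})
    (hR : 4 * R < α) :
    ∀ g : G,
      Set.BijOn (QuotientGroup.mk' N)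
        {h : G | wordLength S (g⁻¹ * h) ≤ R}
        {x : G ⧸ N | wordLength ((QuotientGroup.mk' N) '' S)
          ((QuotientGroup.mk' N g)⁻¹ * x) ≤ R} ∧
      ∀ h k : G, wordLength S (g⁻¹ * h) ≤ R → wordLength S (g⁻¹ * k) ≤ R →
        wordLength ((QuotientGroup.mk' N) '' S)
          ((QuotientGroup.mk' N h)⁻¹ * QuotientGroup.mk' N k) =
        wordLength S (h⁻¹ * k) := by
  intro g
  set π := QuotientGroup.mk' N with hπ
  -- α ≤ l_S(y) for nontrivial y ∈ N
  have key : ∀ y : G, y ∈ N → wordLength S y ≤ 4 * R → y = 1 := by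
    intro y hy hly
    by_contra hne
    have : α ≤ wordLength S y := hα ▸ Nat.sInf_le ⟨y, hy, hne, rfl⟩
    omega
  have hsurj : Function.Surjective π := QuotientGroup.mk'_surjective N
  have hgen' : Subgroup.closure (π '' S) = ⊤ := by
    rw [← MonoidHom.map_closure, hgen]
    exact Subgroup.map_top_of_surjective π hsurj
  have hsym' : (⇑π '' S)⁻¹ = ⇑π '' S := by
    ext x
    simp only [Set.mem_inv, Set.mem_image]
    constructor
    · rintro ⟨y, hy, hxy⟩
      refine ⟨y⁻¹, ?_, by rw [map_inv, hxy, inv_inv]⟩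
      rw [← hsym]; simpa using hy
    · rintro ⟨y, hy, rfl⟩
      refine ⟨y⁻¹, ?_, by rw [map_inv]⟩
      rw [← hsym]; simpa using hy
  have hmk : ∀ a b : G, π a = π b → a⁻¹ * b ∈ N := by
    intro a b hab
    have : (a : G ⧸ N) = (b : G ⧸ N) := hab
    exact (QuotientGroup.eq).mp this
  have dist : ∀ h k : G, wordLength S (g⁻¹ * h) ≤ R → wordLength S (g⁻¹ * k) ≤ R →
      wordLength (⇑π '' S) ((π h)⁻¹ * π k) = wordLength S (h⁻¹ * k) := by
    intro h k hh hk
    have h2R : wordLength S (h⁻¹ * k) ≤ 2 * R := by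
      have e : h⁻¹ * k = (g⁻¹ * h)⁻¹ * (g⁻¹ * k) := by group
      rw [e]
      calc wordLength S ((g⁻¹*h)⁻¹ * (g⁻¹*k))
          ≤ wordLength S (g⁻¹*h)⁻¹ + wordLength S (g⁻¹*k) := wl_mul hsym hgen _ _
        _ = wordLength S (g⁻¹*h) + wordLength S (g⁻¹*k) := by rw [wl_inv hsym hgen]
        _ ≤ 2 * R := by omega
    have hle : wordLength (⇑π '' S) ((π h)⁻¹ * π k) ≤ wordLength S (h⁻¹ * k) := by
      have e : (π h)⁻¹ * π k = π (h⁻¹ * k) := by rw [map_mul, map_inv]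
      rw [e]; exact wl_map π hsym hgen _
    refine le_antisymm hle ?_
    obtain ⟨l', hl'len, hl's, hl'p⟩ := exists_word hsym' hgen' ((π h)⁻¹ * π k)
    obtain ⟨l, hlen, hls, hlp⟩ := lift_word π l' hl's
    have hπp : π l.prod = π (h⁻¹ * k) := by rw [hlp, hl'p, map_mul, map_inv]
    have hp : wordLength S l.prod ≤ wordLength (⇑π '' S) ((π h)⁻¹ * π k) := by
      rw [← hl'len, ← hlen]; exact wl_le hls rfl
    have hm2R : wordLength (⇑π '' S) ((π h)⁻¹ * π k) ≤ 2*R := le_trans hle h2R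
    have hsmall : wordLength S (l.prod⁻¹ * (h⁻¹*k)) ≤ 4*R :=
      calc wordLength S (l.prod⁻¹ * (h⁻¹*k))
          ≤ wordLength S l.prod⁻¹ + wordLength S (h⁻¹*k) := wl_mul hsym hgen _ _
        _ = wordLength S l.prod + wordLength S (h⁻¹*k) := by rw [wl_inv hsym hgen]
        _ ≤ 4*R := by omega
    have heq : l.prod⁻¹ * (h⁻¹*k) = 1 := key _ (hmk _ _ hπp) hsmall
    have : l.prod = h⁻¹ * k := inv_mul_eq_one.mp heq
    rw [← this]; exact hp
  refine ⟨⟨?_, ?_, ?_⟩, dist⟩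
  · -- MapsTo
    intro h hh
    have e : (π g)⁻¹ * π h = π (g⁻¹ * h) := by rw [map_mul, map_inv]
    simp only [Set.mem_setOf_eq] at hh ⊢
    rw [e]
    exact le_trans (wl_map π hsym hgen _) hh
  · -- InjOn
    intro h hh k hk hhk
    have h2R : wordLength S (h⁻¹ * k) ≤ 4 * R := by
      have e : h⁻¹ * k = (g⁻¹ * h)⁻¹ * (g⁻¹ * k) := by group
      rw [e]
      calc wordLength S ((g⁻¹*h)⁻¹ * (g⁻¹*k))
          ≤ wordLength S (g⁻¹*h)⁻¹ + wordLength S (g⁻¹*k) := wl_mul hsym hgen _ _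
        _ = wordLength S (g⁻¹*h) + wordLength S (g⁻¹*k) := by rw [wl_inv hsym hgen]
        _ ≤ 4 * R := by
            simp only [Set.mem_setOf_eq] at hh hk; omega
    exact inv_mul_eq_one.mp (key _ (hmk _ _ hhk) h2R)
  · -- SurjOn
    intro x hx
    simp only [Set.mem_setOf_eq] at hx
    obtain ⟨l', hl'len, hl's, hl'p⟩ := exists_word hsym' hgen' ((π g)⁻¹ * x)
    obtain ⟨l, hlen, hls, hlp⟩ := lift_word π l' hl's
    refine ⟨g * l.prod, ?_, ?_⟩
    · simp only [Set.mem_setOf_eq, inv_mul_cancel_left]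
      calc wordLength S l.prod ≤ l.length := wl_le hls rfl
        _ = wordLength (⇑π '' S) ((π g)⁻¹ * x) := by rw [hlen, hl'len]
        _ ≤ R := hx
    · show π (g * l.prod) = x
      rw [map_mul, hlp, hl'p, mul_inv_cancel_left]
end

section
/- Let G be a group with a symmetric generating set S, let N be a nontrivial normal subgroup of finite index in G, and let α = min{l_S(y) : y ∈ N, y ≠ e}. Let r ≥ 1 and m ≥ 1 be integers, let a : G → ℂ be finitely supported with supp a ⊆ {g : l_S(g) ≤ r}, and assume 4(3·r·m + r) < α. Then for every ξ : G/N → ℂ with |supp ξ| ≤ m there exists a finitely supported nonzero ψ : G → ℂ such that ‖λ_{G/N}(a)ξ‖ · ‖ψ‖ ≤ ‖λ_G(a)ψ‖ · ‖ξ‖, where (λ_G(a)ψ)(h) = ∑_{g∈G} a(g)·ψ(g⁻¹h), (λ_{G/N}(a)ξ)(x) = ∑_{g∈G} a(g)·ξ(π(g)⁻¹·x) for the quotient map π : G → G/N, and all norms are l² norms (square root of the sum of squared moduli). -/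
open Function Set

section WordLength

variable {G : Type*} [Group G] {S : Set G}

theorem submonoid_closure_eq_top (hsym : S⁻¹ = S) (hgen : Subgroup.closure S = ⊤) :
    Submonoid.closure S = ⊤ := by
  have h := Subgroup.closure_toSubmonoid S
  rwa [hsym, union_self, hgen, Subgroup.top_toSubmonoid, eq_comm] at h

theorem exists_list_length_eq_wordLength (hS : Submonoid.closure S = ⊤) (g : G) :
    ∃ l : List G, l.length = wordLength S g ∧ (∀ x ∈ l, x ∈ S) ∧ l.prod = g := by
  obtain ⟨l, hl, rfl⟩ := Submonoid.exists_list_of_mem_closure (hS ▸ Submonoid.mem_top g)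
  have hne : {n : ℕ | ∃ l' : List G, l'.length = n ∧ (∀ x ∈ l', x ∈ S) ∧
      l'.prod = l.prod}.Nonempty := ⟨_, l, rfl, hl, rfl⟩
  exact Nat.sInf_mem hne

theorem wordLength_prod_le {l : List G} (hl : ∀ x ∈ l, x ∈ S) :
    wordLength S l.prod ≤ l.length :=
  Nat.sInf_le ⟨l, rfl, hl, rfl⟩

@[simp]
theorem wordLength_one : wordLength S (1 : G) = 0 :=
  Nat.le_zero.mp (wordLength_prod_le (l := []) (by simp))

theorem wordLength_mul_le (hS : Submonoid.closure S = ⊤) (g h : G) :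
    wordLength S (g * h) ≤ wordLength S g + wordLength S h := by
  obtain ⟨l₁, hl₁, hS₁, rfl⟩ := exists_list_length_eq_wordLength hS g
  obtain ⟨l₂, hl₂, hS₂, rfl⟩ := exists_list_length_eq_wordLength hS h
  rw [← hl₁, ← hl₂, ← List.length_append, ← List.prod_append]
  exact wordLength_prod_le fun x hx => (List.mem_append.mp hx).elim (hS₁ x) (hS₂ x)

theorem wordLength_inv_le (hS : Submonoid.closure S = ⊤) (hsym : S⁻¹ = S) (g : G) :
    wordLength S g⁻¹ ≤ wordLength S g := by
  obtain ⟨l, hl, hlS, rfl⟩ := exists_list_length_eq_wordLength hS g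
  rw [← hl, List.prod_inv_reverse, ← List.length_map (f := fun x : G => x⁻¹),
    ← List.length_reverse]
  refine wordLength_prod_le fun x hx => ?_
  obtain ⟨y, hy, rfl⟩ := List.mem_map.mp (List.mem_reverse.mp hx)
  exact hsym ▸ inv_mem_inv.mpr (hlS y hy)

theorem wordLength_inv (hS : Submonoid.closure S = ⊤) (hsym : S⁻¹ = S) (g : G) :
    wordLength S g⁻¹ = wordLength S g :=
  (wordLength_inv_le hS hsym g).antisymm (by simpa using wordLength_inv_le hS hsym g⁻¹)

theorem wordLength_inv_mul_le (hS : Submonoid.closure S = ⊤) (hsym : S⁻¹ = S) (g h : G) :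
    wordLength S (g⁻¹ * h) ≤ wordLength S g + wordLength S h :=
  wordLength_inv hS hsym g ▸ wordLength_mul_le hS g⁻¹ h

end WordLength

noncomputable def quotLength {G : Type*} [Group G] (S : Set G) (N : Subgroup G) (x : G ⧸ N) :
    ℕ :=
  sInf (wordLength S '' {g : G | (g : G ⧸ N) = x})

section QuotLength

variable {G : Type*} [Group G] {S : Set G} {N : Subgroup G}

theorem exists_mk_eq_wordLength_eq_quotLength (x : G ⧸ N) :
    ∃ g : G, (g : G ⧸ N) = x ∧ wordLength S g = quotLength S N x := by
  obtain ⟨g, rfl⟩ := QuotientGroup.mk_surjective x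
  exact Nat.sInf_mem (s := wordLength S '' {g' : G | (g' : G ⧸ N) = g}) ⟨_, g, rfl, rfl⟩

theorem quotLength_mk_le (g : G) : quotLength S N g ≤ wordLength S g :=
  Nat.sInf_le ⟨g, rfl, rfl⟩

theorem eq_of_mk_eq_of_wordLength_add_lt (hS : Submonoid.closure S = ⊤) (hsym : S⁻¹ = S)
    {α : ℕ} (hα : ∀ n ∈ N, n ≠ 1 → α ≤ wordLength S n) {g h : G}
    (hlen : wordLength S g + wordLength S h < α) (hgh : (g : G ⧸ N) = h) : g = h := by
  by_contra hne
  have := hα _ (QuotientGroup.eq.mp hgh) (by rwa [ne_eq, inv_mul_eq_one])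
  have := wordLength_inv_mul_le hS hsym g h
  omega

variable [N.Normal]

@[simp]
theorem quotLength_one : quotLength S N 1 = 0 :=
  Nat.le_zero.mp (by simpa using quotLength_mk_le (S := S) (N := N) 1)

theorem quotLength_mul_le (hS : Submonoid.closure S = ⊤) (x y : G ⧸ N) :
    quotLength S N (x * y) ≤ quotLength S N x + quotLength S N y := by
  obtain ⟨g, rfl, hg⟩ := exists_mk_eq_wordLength_eq_quotLength (S := S) x
  obtain ⟨h, rfl, hh⟩ := exists_mk_eq_wordLength_eq_quotLength (S := S) y
  rw [← hg, ← hh, ← QuotientGroup.mk_mul]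
  exact (quotLength_mk_le _).trans (wordLength_mul_le hS g h)

end QuotLength

noncomputable def l2NormSq {X E : Type*} [Norm E] (f : X → E) : ℝ := ∑ᶠ x, ‖f x‖ ^ 2

section L2NormSq

variable {X Y E : Type*}

theorem l2NormSq_nonneg [Norm E] (f : X → E) : 0 ≤ l2NormSq f :=
  finsum_nonneg fun _ => sq_nonneg _

@[simp]
theorem l2NormSq_zero [SeminormedAddGroup E] : l2NormSq (0 : X → E) = 0 := by
  simp [l2NormSq]

theorem l2NormSq_pos [Finite X] [NormedAddGroup E] {f : X → E} (hf : f ≠ 0) :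
    0 < l2NormSq f := by
  obtain ⟨x, hx⟩ := Function.ne_iff.mp hf
  have := Fintype.ofFinite X
  rw [l2NormSq, finsum_eq_sum_of_fintype]
  exact Finset.sum_pos' (fun _ _ => sq_nonneg _) ⟨x, Finset.mem_univ x, by positivity⟩

theorem l2NormSq_comp_mul_right [Norm E] [Group X] (f : X → E) (x : X) :
    l2NormSq (fun y => f (y * x)) = l2NormSq f :=
  finsum_comp_equiv (Equiv.mulRight x) (f := fun y => ‖f y‖ ^ 2)

theorem l2NormSq_add_of_forall_eq_zero_or [Finite X] [SeminormedAddGroup E] {f g : X → E}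
    (h : ∀ x, f x = 0 ∨ g x = 0) : l2NormSq (f + g) = l2NormSq f + l2NormSq g := by
  rw [l2NormSq, l2NormSq, l2NormSq, ← finsum_add_distrib (toFinite _) (toFinite _)]
  refine finsum_congr fun x => ?_
  rcases h x with hx | hx <;> simp [hx]

theorem l2NormSq_indicator_comp [SeminormedAddGroup E] {p : Y → X} {s : Set Y}
    (hp : InjOn p s) {f : X → E} (hf : support f ⊆ p '' s) :
    l2NormSq (s.indicator (f ∘ p)) = l2NormSq f := by
  have hsupp : support (fun x => ‖f x‖ ^ 2) ⊆ p '' s := fun x hx =>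
    hf fun h => hx (by simp [h])
  calc l2NormSq (s.indicator (f ∘ p)) = ∑ᶠ y ∈ s, ‖f (p y)‖ ^ 2 := by
        rw [l2NormSq, finsum_mem_def]
        refine finsum_congr fun y => ?_
        by_cases hy : y ∈ s <;> simp [hy]
    _ = ∑ᶠ x ∈ p '' s, ‖f x‖ ^ 2 := (finsum_mem_image (f := fun x => ‖f x‖ ^ 2) hp).symm
    _ = l2NormSq f := by rw [finsum_mem_def, indicator_eq_self.mpr hsupp, l2NormSq]

theorem l2NormSq_eq_indicator_add_compl [Finite X] [SeminormedAddGroup E] (f : X → E)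
    (s : Set X) : l2NormSq f = l2NormSq (s.indicator f) + l2NormSq (sᶜ.indicator f) := by
  rw [← l2NormSq_add_of_forall_eq_zero_or, indicator_self_add_compl]
  intro x
  by_cases hx : x ∈ s <;> simp [hx]

end L2NormSq

/-- The operator `λ(a)` of the paper: `φ = MonoidHom.id G` gives `λ_G(a)` and
`φ = QuotientGroup.mk' N` gives `λ_{G/N}(a)`. -/
noncomputable def regularAction {G X R : Type*} [Group G] [Group X] [Semiring R] (φ : G →* X)
    (a : G → R) (ξ : X → R) : X → R :=
  fun x => ∑ᶠ g, a g * ξ ((φ g)⁻¹ * x)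

section RegularAction

variable {G X R : Type*} [Group G] [Group X] [Semiring R] {φ : G →* X} {a : G → R}

theorem exists_ne_zero_of_regularAction_ne_zero {ξ : X → R} {x : X}
    (h : regularAction φ a ξ x ≠ 0) : ∃ g, a g ≠ 0 ∧ ξ ((φ g)⁻¹ * x) ≠ 0 := by
  by_contra! hzero
  refine h (finsum_eq_zero_of_forall_eq_zero fun g => ?_)
  by_cases hg : a g = 0
  · rw [hg, zero_mul]
  · rw [hzero g hg, mul_zero]

@[simp]
theorem regularAction_zero : regularAction φ a 0 = 0 := by
  funext x
  simp [regularAction]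

theorem regularAction_add (ha : (support a).Finite) (ξ₁ ξ₂ : X → R) :
    regularAction φ a (ξ₁ + ξ₂) = regularAction φ a ξ₁ + regularAction φ a ξ₂ := by
  funext x
  simp only [regularAction, Pi.add_apply, mul_add]
  exact finsum_add_distrib (ha.subset fun g hg => left_ne_zero_of_mul hg)
    (ha.subset fun g hg => left_ne_zero_of_mul hg)

theorem regularAction_comp_mul_right (ξ : X → R) (x : X) :
    regularAction φ a (fun y => ξ (y * x)) = fun y => regularAction φ a ξ (y * x) := by
  funext y
  simp only [regularAction, mul_assoc]

end RegularAction

theorem Finset.exists_le_card_eq_succ_of_monotone {α : Type*} {P : ℕ → Finset α}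
    (hP : Monotone P) {T : Finset α} (hT : ∀ j, P j ⊆ T) : ∃ j ≤ T.card, P j = P (j + 1) := by
  by_contra! hne
  have hcard : ∀ j ≤ T.card + 1, j ≤ (P j).card := by
    intro j
    induction j with
    | zero => simp
    | succ j ih =>
      intro hj
      have hlt := Finset.card_lt_card ((hP (Nat.le_add_right j 1)).ssubset_of_ne (hne j (by omega)))
      have := ih (by omega)
      omega
  have := hcard _ le_rfl
  have := Finset.card_le_card (hT (T.card + 1))
  omega

/-- `C` is the first stable term of the increasing sequence `{y ∈ T | ℓ (y x₀⁻¹) ≤ s j}`,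
which stabilises before `j = #T`. -/
theorem exists_separated_cluster {X : Type*} [Group X] {ℓ : X → ℕ} (hℓ₁ : ℓ 1 = 0)
    (hℓ : ∀ x y, ℓ (x * y) ≤ ℓ x + ℓ y) (s : ℕ) {T : Finset X} {x₀ : X} (hx₀ : x₀ ∈ T) :
    ∃ C ⊆ T, x₀ ∈ C ∧ (∀ x ∈ C, ℓ (x * x₀⁻¹) ≤ s * T.card) ∧
      ∀ x ∈ C, ∀ y ∈ T, y ∉ C → s < ℓ (y * x⁻¹) := by
  classical
  set P : ℕ → Finset X := fun j => T.filter fun y => ℓ (y * x₀⁻¹) ≤ s * j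
  have hP : Monotone P := fun i j hij y hy => by
    simp only [P, Finset.mem_filter] at hy ⊢
    exact ⟨hy.1, hy.2.trans (Nat.mul_le_mul_left s hij)⟩
  obtain ⟨j, hjT, hj⟩ :=
    Finset.exists_le_card_eq_succ_of_monotone hP fun j => Finset.filter_subset _ _
  refine ⟨P j, Finset.filter_subset _ _, by simp [P, hx₀, hℓ₁], fun x hx => ?_,
    fun x hx y hy hyC => ?_⟩
  · exact (Finset.mem_filter.mp hx).2.trans (Nat.mul_le_mul_left s hjT)
  · by_contra! hyx
    refine hyC (hj ▸ Finset.mem_filter.mpr ⟨hy, ?_⟩)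
    calc ℓ (y * x₀⁻¹) = ℓ (y * x⁻¹ * (x * x₀⁻¹)) := by group
      _ ≤ s + s * j := (hℓ _ _).trans (add_le_add hyx (Finset.mem_filter.mp hx).2)
      _ = s * (j + 1) := by ring

/-- Mediant inequality, cross-multiplied: `A / B` is at most one of `A₁ / B₁`, `A₂ / B₂`. -/
theorem mediant_cross_mul_le_or_lt {A A₁ A₂ B B₁ B₂ : ℝ} (hA : A = A₁ + A₂)
    (hB : B = B₁ + B₂) : A * B₁ ≤ A₁ * B ∨ A * B₂ < A₂ * B := by
  by_contra! h
  subst hA hB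
  linarith [h.1, h.2]

/-- `A / B ≤ A₁ / B₁ ≤ A₂ / B₂`, cross-multiplied. -/
theorem cross_mul_le_trans {A A₁ A₂ B B₁ B₂ : ℝ} (hB : 0 ≤ B) (hB₁ : 0 < B₁) (hB₂ : 0 ≤ B₂)
    (h₁ : A * B₁ ≤ A₁ * B) (h₂ : A₁ * B₂ ≤ A₂ * B₁) : A * B₂ ≤ A₂ * B := by
  refine le_of_mul_le_mul_right ?_ hB₁
  nlinarith [mul_le_mul_of_nonneg_right h₁ hB₂, mul_le_mul_of_nonneg_right h₂ hB]

section Quotient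

variable {G : Type*} [Group G] {S : Set G} {N : Subgroup G} [N.Normal]

local notation "π" => QuotientGroup.mk' N

theorem regularAction_indicator_eq_zero_or (hS : Submonoid.closure S = ⊤) (hsym : S⁻¹ = S)
    {a : G → ℂ} {r : ℕ} (har : support a ⊆ {g | wordLength S g ≤ r}) {ξ : G ⧸ N → ℂ}
    {C : Set (G ⧸ N)} (hsep : ∀ x ∈ C, ∀ y ∉ C, ξ y ≠ 0 → 2 * r < quotLength S N (y * x⁻¹))
    (z : G ⧸ N) :
    regularAction π a (C.indicator ξ) z = 0 ∨ regularAction π a (Cᶜ.indicator ξ) z = 0 := by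
  by_contra! h
  obtain ⟨g, hg, hgC⟩ := exists_ne_zero_of_regularAction_ne_zero h.1
  obtain ⟨g', hg', hgR⟩ := exists_ne_zero_of_regularAction_ne_zero h.2
  have hy : (π g')⁻¹ * z ∈ Cᶜ := mem_of_indicator_ne_zero hgR
  have hfar := hsep _ (mem_of_indicator_ne_zero hgC) _ hy (by rwa [indicator_of_mem hy] at hgR)
  have heq : (π g')⁻¹ * z * ((π g)⁻¹ * z)⁻¹ = ((g'⁻¹ * g : G) : G ⧸ N) := by simp
  rw [heq] at hfar
  have := quotLength_mk_le (S := S) (N := N) (g'⁻¹ * g)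
  have := wordLength_inv_mul_le hS hsym g' g
  have : wordLength S g ≤ r := har hg
  have : wordLength S g' ≤ r := har hg'
  omega

theorem exists_cluster_mul_le_mul [N.FiniteIndex] (hS : Submonoid.closure S = ⊤)
    (hsym : S⁻¹ = S) {a : G → ℂ} (ha : (support a).Finite) {r : ℕ}
    (har : support a ⊆ {g | wordLength S g ≤ r}) (ξ : G ⧸ N → ℂ) (hξ : ξ ≠ 0) :
    ∃ (ξ' : G ⧸ N → ℂ) (x₀ : G ⧸ N), ξ' ≠ 0 ∧
      (∀ x, ξ' x ≠ 0 → quotLength S N (x * x₀⁻¹) ≤ 2 * r * (support ξ).ncard) ∧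
      l2NormSq (regularAction π a ξ) * l2NormSq ξ' ≤
        l2NormSq (regularAction π a ξ') * l2NormSq ξ := by
  classical
  induction hk : (support ξ).ncard using Nat.strong_induction_on generalizing ξ with
  | _ k ih =>
    obtain ⟨x₀, hx₀⟩ : ∃ x, ξ x ≠ 0 := Function.ne_iff.mp hξ
    set T := (toFinite (support ξ)).toFinset
    obtain ⟨C, -, hx₀C, hCrad, hCsep⟩ := exists_separated_cluster quotLength_one
      (quotLength_mul_le hS) (2 * r) (T := T) (x₀ := x₀) (by simpa [T] using hx₀)
    have hTk : T.card = k := by rw [← hk, ncard_eq_toFinset_card _ (toFinite _)]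
    set ξC := (C : Set (G ⧸ N)).indicator ξ
    set ξR := (C : Set (G ⧸ N))ᶜ.indicator ξ
    have hB : l2NormSq ξ = l2NormSq ξC + l2NormSq ξR := l2NormSq_eq_indicator_add_compl ξ _
    have hA : l2NormSq (regularAction π a ξ) =
        l2NormSq (regularAction π a ξC) + l2NormSq (regularAction π a ξR) := by
      rw [← l2NormSq_add_of_forall_eq_zero_or, ← regularAction_add ha, indicator_self_add_compl]
      exact regularAction_indicator_eq_zero_or hS hsym har
        fun x hx y hy hξy => hCsep x hx y (by simpa [T] using hξy) hy
    rcases mediant_cross_mul_le_or_lt hA hB with hC | hR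
    · refine ⟨ξC, x₀, Function.ne_iff.mpr ⟨x₀, by simpa [ξC, hx₀C] using hx₀⟩,
        fun x hx => ?_, hC⟩
      exact hTk ▸ hCrad x (mem_of_indicator_ne_zero hx)
    · have hξR : ξR ≠ 0 := by
        rintro hξR
        simp [hξR] at hR
      have hsub : support ξR ⊂ support ξ := by
        rw [support_indicator]
        exact (ssubset_iff_of_subset inter_subset_right).mpr ⟨x₀, hx₀, fun h => h.1 (by simpa)⟩
      obtain ⟨ξ', x₁, hξ', hrad, hratio⟩ := ih _ (hk ▸ ncard_lt_ncard hsub) ξR hξR rfl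
      refine ⟨ξ', x₁, hξ', fun x hx => (hrad x hx).trans ?_, ?_⟩
      · exact Nat.mul_le_mul_left _ (hk ▸ ncard_le_ncard hsub.subset (toFinite _))
      · exact cross_mul_le_trans (l2NormSq_nonneg _) (l2NormSq_pos hξR) (l2NormSq_nonneg _)
          hR.le hratio

/-- `ψ` is `ξ` transported along a shortest section `σ` of `π`. On the ball of radius `r + D`,
where `π` is injective, `λ_G(a)ψ` is `λ_{G/N}(a)ξ ∘ π`, and it vanishes outside. -/
theorem exists_lift_of_quotLength_le (hS : Submonoid.closure S = ⊤) (hsym : S⁻¹ = S) {α : ℕ}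
    (hα : ∀ n ∈ N, n ≠ 1 → α ≤ wordLength S n) {a : G → ℂ} {r D : ℕ}
    (har : support a ⊆ {g | wordLength S g ≤ r}) (hD : 2 * (r + D) < α) {ξ : G ⧸ N → ℂ}
    (hξfin : (support ξ).Finite) (hξ : ∀ x, ξ x ≠ 0 → quotLength S N x ≤ D) :
    ∃ ψ : G → ℂ, (support ψ).Finite ∧ l2NormSq ψ = l2NormSq ξ ∧
      l2NormSq (regularAction (MonoidHom.id G) a ψ) = l2NormSq (regularAction π a ξ) := by
  choose σ hσ hσlen using exists_mk_eq_wordLength_eq_quotLength (S := S) (N := N)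
  have hinj {g h : G} (hgh : wordLength S g + wordLength S h < α) (hπ : π g = π h) : g = h :=
    eq_of_mk_eq_of_wordLength_add_lt hS hsym hα hgh hπ
  set ψ : G → ℂ := (range σ).indicator (ξ ∘ π)
  have hψ (y : G) (hy : wordLength S y ≤ 2 * r + D) : ψ y = ξ (π y) := by
    by_cases hξy : ξ (π y) = 0
    · rw [hξy]
      exact indicator_apply_eq_zero.mpr fun _ => hξy
    · have hσy : σ (π y) = y := hinj (by have := hξ _ hξy; rw [hσlen]; omega) (by simp [hσ])
      exact indicator_of_mem (mem_range.mpr ⟨_, hσy⟩) _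
  have hψsupp (y : G) (hy : ψ y ≠ 0) : ∃ x, ξ x ≠ 0 ∧ σ x = y := by
    obtain ⟨x, rfl⟩ := mem_of_indicator_ne_zero hy
    exact ⟨x, by simpa [ψ, hσ] using hy, rfl⟩
  have hreg : regularAction (MonoidHom.id G) a ψ =
      {h | wordLength S h ≤ r + D}.indicator (regularAction π a ξ ∘ π) := by
    funext h
    by_cases hh : wordLength S h ≤ r + D
    · rw [indicator_of_mem (show h ∈ {h | wordLength S h ≤ r + D} from hh)]
      refine finsum_congr fun g => ?_
      by_cases hg : a g = 0
      · simp [hg]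
      · have := wordLength_inv_mul_le hS hsym g h
        have : wordLength S g ≤ r := har hg
        simp [hψ (g⁻¹ * h) (by omega)]
    · rw [indicator_of_notMem (show h ∉ {h | wordLength S h ≤ r + D} from hh)]
      by_contra hne
      obtain ⟨g, hg, hgψ⟩ := exists_ne_zero_of_regularAction_ne_zero hne
      obtain ⟨x, hx, hσx⟩ := hψsupp _ hgψ
      refine hh ?_
      calc wordLength S h = wordLength S (g * σ x) := by simp [hσx]
        _ ≤ r + D :=
          (wordLength_mul_le hS _ _).trans (add_le_add (har hg) (hσlen x ▸ hξ x hx))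
  refine ⟨ψ, (hξfin.image σ).subset fun y hy => ?_, ?_, ?_⟩
  · obtain ⟨x, hx, rfl⟩ := hψsupp y hy
    exact mem_image_of_mem σ hx
  · refine l2NormSq_indicator_comp ?_ fun x _ => ⟨σ x, mem_range_self x, by simp [hσ]⟩
    rintro _ ⟨x, rfl⟩ _ ⟨y, rfl⟩ hxy
    simp only [QuotientGroup.mk'_apply, hσ] at hxy
    rw [hxy]
  · rw [hreg]
    refine l2NormSq_indicator_comp (fun g (hg : wordLength S g ≤ r + D) h
      (hh : wordLength S h ≤ r + D) hgh => hinj (by omega) hgh) fun z hz => ?_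
    obtain ⟨g, hg, hgz⟩ := exists_ne_zero_of_regularAction_ne_zero hz
    refine ⟨g * σ ((π g)⁻¹ * z), ?_, by simp [hσ]⟩
    exact (wordLength_mul_le hS _ _).trans (add_le_add (har hg) (hσlen _ ▸ hξ _ hgz))

theorem exists_lift_of_quotLength_mul_inv_le (hS : Submonoid.closure S = ⊤) (hsym : S⁻¹ = S)
    {α : ℕ} (hα : ∀ n ∈ N, n ≠ 1 → α ≤ wordLength S n) {a : G → ℂ} {r D : ℕ}
    (har : support a ⊆ {g | wordLength S g ≤ r}) (hD : 2 * (r + D) < α) {ξ : G ⧸ N → ℂ}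
    (hξfin : (support ξ).Finite) (x₀ : G ⧸ N)
    (hξ : ∀ x, ξ x ≠ 0 → quotLength S N (x * x₀⁻¹) ≤ D) :
    ∃ ψ : G → ℂ, (support ψ).Finite ∧ l2NormSq ψ = l2NormSq ξ ∧
      l2NormSq (regularAction (MonoidHom.id G) a ψ) = l2NormSq (regularAction π a ξ) := by
  obtain ⟨ψ, hfin, hψ, hreg⟩ := exists_lift_of_quotLength_le hS hsym hα har hD
    (ξ := fun x => ξ (x * x₀)) (hξfin.preimage (mul_left_injective x₀).injOn)
    fun x hx => by simpa using hξ _ hx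
  refine ⟨ψ, hfin, hψ.trans (l2NormSq_comp_mul_right ξ x₀), hreg.trans ?_⟩
  rw [regularAction_comp_mul_right]
  exact l2NormSq_comp_mul_right _ x₀

end Quotient

theorem stmt_12_general {G : Type*} [Group G] (S : Set G)
    (hsym : S⁻¹ = S) (hgen : Subgroup.closure S = ⊤)
    (N : Subgroup G) [N.Normal] [N.FiniteIndex]
    (α r m : ℕ)
    (hα : α = sInf {n : ℕ | ∃ y : G, y ∈ N ∧ y ≠ 1 ∧ wordLength S y = n})
    (a : G → ℂ) (ha : (Function.support a).Finite)
    (har : Function.support a ⊆ {g : G | wordLength S g ≤ r})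
    (hcond : 4 * (3 * r * m + r) < α) :
    ∀ ξ : G ⧸ N → ℂ, (Function.support ξ).ncard ≤ m →
      ∃ ψ : G → ℂ, ψ ≠ 0 ∧ (Function.support ψ).Finite ∧
        Real.sqrt (∑ᶠ x : G ⧸ N,
            ‖∑ᶠ g : G, a g * ξ ((QuotientGroup.mk' N g)⁻¹ * x)‖ ^ 2) *
          Real.sqrt (∑ᶠ h : G, ‖ψ h‖ ^ 2) ≤
        Real.sqrt (∑ᶠ h : G, ‖∑ᶠ g : G, a g * ψ (g⁻¹ * h)‖ ^ 2) *
          Real.sqrt (∑ᶠ x : G ⧸ N, ‖ξ x‖ ^ 2) := by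
  classical
  intro ξ hξm
  have hS := submonoid_closure_eq_top hsym hgen
  have hN (n : G) (hn : n ∈ N) (hn₁ : n ≠ 1) : α ≤ wordLength S n :=
    hα ▸ Nat.sInf_le ⟨n, hn, hn₁, rfl⟩
  suffices h : ∃ ψ : G → ℂ, ψ ≠ 0 ∧ (support ψ).Finite ∧
      l2NormSq (regularAction (QuotientGroup.mk' N) a ξ) * l2NormSq ψ ≤
        l2NormSq (regularAction (MonoidHom.id G) a ψ) * l2NormSq ξ by
    obtain ⟨ψ, hψ, hfin, hle⟩ := h
    refine ⟨ψ, hψ, hfin, ?_⟩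
    have := Real.sqrt_le_sqrt hle
    rwa [Real.sqrt_mul (l2NormSq_nonneg _), Real.sqrt_mul (l2NormSq_nonneg _)] at this
  rcases eq_or_ne ξ 0 with rfl | hξ
  · exact ⟨Pi.single 1 1, by simp, (finite_singleton 1).subset Pi.support_single_subset,
      by simp⟩
  obtain ⟨ξ', x₀, hξ', hrad, hle⟩ := exists_cluster_mul_le_mul hS hsym ha har ξ hξ
  obtain ⟨ψ, hfin, hψ, hreg⟩ := exists_lift_of_quotLength_mul_inv_le hS hsym hN har
    (D := 2 * r * m) (by nlinarith) (toFinite _) x₀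
    fun x hx => (hrad x hx).trans (Nat.mul_le_mul_left _ hξm)
  refine ⟨ψ, fun h => ?_, hfin, hψ ▸ hreg ▸ hle⟩
  have := l2NormSq_pos hξ'
  rw [← hψ, h, l2NormSq_zero] at this
  exact lt_irrefl _ this

/-- If a is supported in the ball of radius r and
4(3rm + r) < α = min{l_S(y) : y ∈ N, y ≠ e}, then for every ξ on G/N supported
on at most m points there is a nonzero finitely supported ψ on G with
‖λ_{G/N}(a)ξ‖·‖ψ‖ ≤ ‖λ_G(a)ψ‖·‖ξ‖. -/
theorem stmt_12 {G : Type*} [Group G] (S : Set G)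
    (hsym : S⁻¹ = S) (hgen : Subgroup.closure S = ⊤)
    (N : Subgroup G) [N.Normal] [N.FiniteIndex] (hN : N ≠ ⊥)
    (α r m : ℕ) (hr : 1 ≤ r) (hm : 1 ≤ m)
    (hα : α = sInf {n : ℕ | ∃ y : G, y ∈ N ∧ y ≠ 1 ∧ wordLength S y = n})
    (a : G → ℂ) (ha : (Function.support a).Finite)
    (har : Function.support a ⊆ {g : G | wordLength S g ≤ r})
    (hcond : 4 * (3 * r * m + r) < α) :
    ∀ ξ : G ⧸ N → ℂ, (Function.support ξ).ncard ≤ m →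
      ∃ ψ : G → ℂ, ψ ≠ 0 ∧ (Function.support ψ).Finite ∧
        Real.sqrt (∑ᶠ x : G ⧸ N,
            ‖∑ᶠ g : G, a g * ξ ((QuotientGroup.mk' N g)⁻¹ * x)‖ ^ 2) *
          Real.sqrt (∑ᶠ h : G, ‖ψ h‖ ^ 2) ≤
        Real.sqrt (∑ᶠ h : G, ‖∑ᶠ g : G, a g * ψ (g⁻¹ * h)‖ ^ 2) *
          Real.sqrt (∑ᶠ x : G ⧸ N, ‖ξ x‖ ^ 2) :=
  stmt_12_general S hsym hgen N α r m hα a ha har hcond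
end

section
/- Let q : X → Y be a surjection of nonempty finite sets such that every fiber q⁻¹(y) has the same cardinality |X|/|Y|. For y ∈ Y set η_y = √(|Y|/|X|)·χ_{q⁻¹(y)} ∈ l²(X). Then (η_y)_{y∈Y} is an orthonormal family in l²(X), and for every ξ : X → ℂ the vector Qξ = ∑_{y∈Y} ⟨η_y, ξ⟩·η_y satisfies ‖Qξ‖² ≤ |supp ξ| · (|Y|/|X|) · ‖ξ‖². -/
/-!
The vectors η_y have pairwise disjoint supports, so they are orthogonal, and ‖η_y‖² = |q⁻¹(y)|·|Y|/|X| = 1.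
Qξ replaces ξ on each fiber by its average there, so ‖Qξ‖² = (|Y|/|X|)·∑_y |∑_{q⁻¹(y)} ξ|², and
Cauchy–Schwarz over the at most |supp ξ| nonzero terms of each fiber sum gives the bound.
-/

open Finset ComplexConjugate

theorem norm_sum_sq_le_ncard_support_mul {ι E : Type*} [Finite ι] [SeminormedAddCommGroup E]
    (s : Finset ι) (f : ι → E) :
    ‖∑ i ∈ s, f i‖ ^ 2 ≤ (Function.support f).ncard * ∑ i ∈ s, ‖f i‖ ^ 2 := by
  classical
  set t := s.filter fun i => f i ≠ 0
  have hsum : ∑ i ∈ s, f i = ∑ i ∈ t, f i := (sum_filter_ne_zero s).symm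
  have hcard : #t ≤ (Function.support f).ncard := by
    rw [← Set.ncard_coe_finset]
    exact Set.ncard_le_ncard (fun i hi => (mem_filter.mp hi).2) (Set.toFinite _)
  calc ‖∑ i ∈ s, f i‖ ^ 2 ≤ (∑ i ∈ t, ‖f i‖) ^ 2 := by
        rw [hsum]; gcongr; exact norm_sum_le _ _
    _ ≤ #t * ∑ i ∈ t, ‖f i‖ ^ 2 := sq_sum_le_card_mul_sum_sq
    _ ≤ (Function.support f).ncard * ∑ i ∈ s, ‖f i‖ ^ 2 := by
        gcongr
        exact filter_subset _ _

namespace Fibers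

variable {X Y : Type*} [Fintype X] [DecidableEq Y] (q : X → Y)

def fiber (y : Y) : Finset X := univ.filter fun x => q x = y

def fiberSum (f : X → ℂ) (y : Y) : ℂ := ∑ x ∈ fiber q y, f x

def fiberIndicator (a : ℝ) (y : Y) (x : X) : ℂ := if q x = y then (a : ℂ) else 0

theorem sum_conj_fiberIndicator_mul (a : ℝ) (y : Y) (f : X → ℂ) :
    ∑ x, conj (fiberIndicator q a y x) * f x = a * fiberSum q f y := by
  simp only [fiberIndicator, fiberSum, fiber, mul_sum, sum_filter]
  refine sum_congr rfl fun x _ => ?_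
  split_ifs <;> simp

theorem fiberSum_fiberIndicator (a : ℝ) (y y' : Y) :
    fiberSum q (fiberIndicator q a y') y = if y = y' then #(fiber q y) * (a : ℂ) else 0 := by
  simp only [fiberSum, fiberIndicator]
  split_ifs with h
  · subst h
    rw [← nsmul_eq_mul, ← sum_const]
    exact sum_congr rfl fun x hx => if_pos (mem_filter.mp hx).2
  · exact sum_eq_zero fun x hx => if_neg ((mem_filter.mp hx).2 ▸ h)

variable [Fintype Y]

theorem sum_fiberSum_mul_fiberIndicator (a : ℝ) (f : X → ℂ) (x : X) :
    ∑ y, (a * fiberSum q f y) * fiberIndicator q a y x = (a ^ 2 : ℝ) * fiberSum q f (q x) := by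
  simp only [fiberIndicator, mul_ite, mul_zero, sum_ite_eq, mem_univ, if_true]
  push_cast; ring

theorem sum_comp_eq_sum_card_fiber_mul (g : Y → ℝ) :
    ∑ x, g (q x) = ∑ y, #(fiber q y) * g y := by
  rw [← sum_fiberwise univ q]
  refine sum_congr rfl fun y _ => ?_
  rw [← nsmul_eq_mul, ← sum_const]
  exact sum_congr rfl fun x hx => by rw [(mem_filter.mp hx).2]

theorem sum_norm_sq_mul_fiberSum_le {c : ℝ} (hc₀ : 0 ≤ c) (hc : ∀ y, #(fiber q y) * c = 1)
    (f : X → ℂ) :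
    ∑ x, ‖(c : ℂ) * fiberSum q f (q x)‖ ^ 2 ≤ (Function.support f).ncard * c * ∑ x, ‖f x‖ ^ 2 := by
  calc ∑ x, ‖(c : ℂ) * fiberSum q f (q x)‖ ^ 2
      = ∑ y, c * ‖fiberSum q f y‖ ^ 2 := by
        simp only [norm_mul, Complex.norm_real, Real.norm_of_nonneg hc₀, mul_pow]
        rw [sum_comp_eq_sum_card_fiber_mul q fun y => c ^ 2 * ‖fiberSum q f y‖ ^ 2]
        refine sum_congr rfl fun y _ => ?_
        linear_combination c * ‖fiberSum q f y‖ ^ 2 * hc y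
    _ ≤ ∑ y, c * ((Function.support f).ncard * ∑ x ∈ fiber q y, ‖f x‖ ^ 2) := by
        gcongr
        exact norm_sum_sq_le_ncard_support_mul _ _
    _ = (Function.support f).ncard * c * ∑ x, ‖f x‖ ^ 2 := by
        rw [← sum_fiberwise univ q, mul_sum]
        exact sum_congr rfl fun y _ => by simp only [fiber]; ring

end Fibers

open Fibers in
theorem stmt_13_general {X Y : Type*} [Fintype X] [Fintype Y] [Nonempty X]
    [DecidableEq Y] (q : X → Y)
    (hfib : ∀ y : Y, (Finset.univ.filter fun x => q x = y).card * Fintype.card Y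
      = Fintype.card X)
    (η : Y → X → ℂ)
    (hη : ∀ y x, η y x =
      if q x = y then (Real.sqrt ((Fintype.card Y : ℝ) / (Fintype.card X : ℝ)) : ℂ)
      else 0)
    (ξ Qξ : X → ℂ)
    (hQ : ∀ x, Qξ x = ∑ y : Y, (∑ x' : X, (starRingEnd ℂ) (η y x') * ξ x') * η y x) :
    (∀ y y' : Y, ∑ x : X, (starRingEnd ℂ) (η y x) * η y' x
      = if y = y' then 1 else 0) ∧
    ∑ x : X, ‖Qξ x‖ ^ 2 ≤
      ((Function.support ξ).ncard : ℝ) * ((Fintype.card Y : ℝ) / (Fintype.card X : ℝ))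
        * ∑ x : X, ‖ξ x‖ ^ 2 := by
  set c : ℝ := (Fintype.card Y : ℝ) / (Fintype.card X : ℝ)
  have hc : ∀ y, #(fiber q y) * c = 1 := fun y => by
    have hX : (0 : ℝ) < Fintype.card X := by exact_mod_cast Fintype.card_pos
    rw [← mul_div_assoc, div_eq_one_iff_eq hX.ne']
    exact_mod_cast hfib y
  have hsq : Real.sqrt c ^ 2 = c := Real.sq_sqrt (by positivity)
  obtain rfl : η = fiberIndicator q (Real.sqrt c) := funext₂ hη
  refine ⟨fun y y' => ?_, ?_⟩
  · rw [sum_conj_fiberIndicator_mul, fiberSum_fiberIndicator]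
    split_ifs with h
    · have hnorm : (#(fiber q y) : ℝ) * (Real.sqrt c * Real.sqrt c) = 1 := by
        rw [← sq, hsq, hc]
      rw [mul_left_comm]
      exact_mod_cast hnorm
    · simp
  · have hQc : Qξ = fun x => (c : ℂ) * fiberSum q ξ (q x) := funext fun x => by
      simp only [hQ, sum_conj_fiberIndicator_mul, sum_fiberSum_mul_fiberIndicator, hsq]
    rw [hQc]
    exact sum_norm_sq_mul_fiberSum_le q (by positivity) hc ξ

/-- If q : X → Y is a surjection of nonempty finite sets with all
fibers of cardinality |X|/|Y|, then the normalized fiber indicators η_y form an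
orthonormal family in l²(X), and the projection Qξ = ∑_y ⟨η_y, ξ⟩·η_y satisfies
‖Qξ‖² ≤ |supp ξ|·(|Y|/|X|)·‖ξ‖². -/
theorem stmt_13 {X Y : Type*} [Fintype X] [Fintype Y] [Nonempty X] [Nonempty Y]
    [DecidableEq Y] (q : X → Y) (hsurj : Function.Surjective q)
    (hfib : ∀ y : Y, (Finset.univ.filter fun x => q x = y).card * Fintype.card Y
      = Fintype.card X)
    (η : Y → X → ℂ)
    (hη : ∀ y x, η y x =
      if q x = y then (Real.sqrt ((Fintype.card Y : ℝ) / (Fintype.card X : ℝ)) : ℂ)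
      else 0)
    (ξ Qξ : X → ℂ)
    (hQ : ∀ x, Qξ x = ∑ y : Y, (∑ x' : X, (starRingEnd ℂ) (η y x') * ξ x') * η y x) :
    (∀ y y' : Y, ∑ x : X, (starRingEnd ℂ) (η y x) * η y' x
      = if y = y' then 1 else 0) ∧
    ∑ x : X, ‖Qξ x‖ ^ 2 ≤
      ((Function.support ξ).ncard : ℝ) * ((Fintype.card Y : ℝ) / (Fintype.card X : ℝ))
        * ∑ x : X, ‖ξ x‖ ^ 2 :=
  stmt_13_general q hfib η hη ξ Qξ hQ
end

section
/- Let X be a nonempty finite set and set ξ⁰ = |X|^{-1/2}·χ_X ∈ l²(X) (the normalized constant function). Let T : l²(X) → l²(X) be a linear map with T ξ⁰ = ξ⁰, and let δ > 0 be such that ‖T η − η‖ ≥ δ·‖η‖ for every η ∈ l²(X) with ⟨ξ⁰, η⟩ = 0. If ξ ∈ l²(X) satisfies ‖ξ‖ = 1, |supp ξ| ≤ m, and ‖T ξ − ξ‖ < ε for some ε with 0 < ε ≤ δ, then m > (1 − ε²/δ²)·|X|. -/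
/-!
Write `ξ = c ξ⁰ + η` with `c = ⟨ξ⁰, ξ⟩` and `η ⟂ ξ⁰`. Since `T` fixes `ξ⁰`, `Tη − η = Tξ − ξ`, so the
spectral gap gives `δ² (1 − |c|²) = δ² ‖η‖² ≤ ‖Tξ − ξ‖² < ε²`. On the other hand `c` only sees the
support of `ξ`, and Cauchy–Schwarz on the support gives `|c|² ≤ |supp ξ| / |X| ≤ m / |X|`.
-/

open Finset ComplexConjugate WithLp
open scoped InnerProductSpace

section SpectralGap

variable {𝕜 E : Type*} [RCLike 𝕜] [NormedAddCommGroup E] [InnerProductSpace 𝕜 E]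

theorem sq_mul_sub_norm_inner_sq_le_of_gap {u : E} (hu : ‖u‖ = 1) {T : E →ₗ[𝕜] E}
    (hTu : T u = u) {δ : ℝ} (hδ : 0 ≤ δ)
    (hgap : ∀ η, ⟪u, η⟫_𝕜 = 0 → δ * ‖η‖ ≤ ‖T η - η‖) (ξ : E) :
    δ ^ 2 * (‖ξ‖ ^ 2 - ‖⟪u, ξ⟫_𝕜‖ ^ 2) ≤ ‖T ξ - ξ‖ ^ 2 := by
  set c := ⟪u, ξ⟫_𝕜
  set η := ξ - c • u
  have horth : ⟪u, η⟫_𝕜 = 0 := by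
    simp [η, inner_sub_right, inner_smul_right, inner_self_eq_norm_sq_to_K, hu, c]
  have hTη : T η - η = T ξ - ξ := by
    simp only [η, map_sub, map_smul, hTu]; abel
  have hpyth : ‖ξ‖ ^ 2 = ‖c‖ ^ 2 + ‖η‖ ^ 2 := by
    have h := norm_add_sq_eq_norm_sq_add_norm_sq_of_inner_eq_zero (c • u) η
      (by rw [inner_smul_left, horth, mul_zero])
    rwa [add_sub_cancel, norm_smul, hu, mul_one, ← sq, ← sq, ← sq] at h
  calc δ ^ 2 * (‖ξ‖ ^ 2 - ‖c‖ ^ 2) = (δ * ‖η‖) ^ 2 := by rw [hpyth]; ring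
    _ ≤ ‖T η - η‖ ^ 2 := pow_le_pow_left₀ (by positivity) (hgap η horth) 2
    _ = ‖T ξ - ξ‖ ^ 2 := by rw [hTη]

end SpectralGap

theorem norm_sum_conj_mul_sq_le {X 𝕜 : Type*} [Fintype X] [RCLike 𝕜] {f g : X → 𝕜} {a : ℝ}
    (hf : ∀ x, ‖f x‖ ≤ a) :
    ‖∑ x, conj (f x) * g x‖ ^ 2 ≤ a ^ 2 * (Function.support g).ncard * ∑ x, ‖g x‖ ^ 2 := by
  classical
  set S := (Function.support g).toFinset
  have hS : ∀ h : X → ℝ, (∀ x, g x = 0 → h x = 0) → ∑ x ∈ S, h x = ∑ x, h x := fun h hh =>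
    Finset.sum_subset (subset_univ S) fun x _ hx => hh x (by simpa [S] using hx)
  have hbound : ‖∑ x, conj (f x) * g x‖ ≤ a * ∑ x ∈ S, ‖g x‖ := by
    calc ‖∑ x, conj (f x) * g x‖ ≤ ∑ x, ‖conj (f x) * g x‖ := norm_sum_le _ _
      _ ≤ ∑ x, a * ‖g x‖ := by
        gcongr with x; rw [norm_mul, RCLike.norm_conj]; gcongr; exact hf x
      _ = a * ∑ x ∈ S, ‖g x‖ := by rw [← mul_sum, hS _ (by simp +contextual)]
  calc ‖∑ x, conj (f x) * g x‖ ^ 2 ≤ a ^ 2 * (∑ x ∈ S, ‖g x‖) ^ 2 := by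
        rw [← mul_pow]; exact pow_le_pow_left₀ (norm_nonneg _) hbound 2
    _ ≤ a ^ 2 * (#S * ∑ x ∈ S, ‖g x‖ ^ 2) := by gcongr; exact sq_sum_le_card_mul_sum_sq
    _ = a ^ 2 * (Function.support g).ncard * ∑ x, ‖g x‖ ^ 2 := by
        rw [hS _ (by simp +contextual), Set.ncard_eq_toFinset_card']; ring

section Coordinates

variable {X 𝕜 : Type*} [Fintype X] [RCLike 𝕜]

theorem EuclideanSpace.inner_toLp_toLp_eq_sum (f g : X → 𝕜) :
    ⟪(toLp 2 f : EuclideanSpace 𝕜 X), toLp 2 g⟫_𝕜 = ∑ x, conj (f x) * g x := by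
  simp [EuclideanSpace.inner_toLp_toLp, dotProduct, mul_comm]

theorem sq_mul_sub_norm_sum_conj_mul_sq_le_of_gap {u : X → 𝕜} (hu : ∑ x, ‖u x‖ ^ 2 = 1)
    {T : (X → 𝕜) →ₗ[𝕜] (X → 𝕜)} (hTu : T u = u) {δ : ℝ} (hδ : 0 ≤ δ)
    (hgap : ∀ η : X → 𝕜, ∑ x, conj (u x) * η x = 0 →
      δ * √(∑ x, ‖η x‖ ^ 2) ≤ √(∑ x, ‖T η x - η x‖ ^ 2)) (ξ : X → 𝕜) :
    δ ^ 2 * (∑ x, ‖ξ x‖ ^ 2 - ‖∑ x, conj (u x) * ξ x‖ ^ 2) ≤ ∑ x, ‖T ξ x - ξ x‖ ^ 2 := by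
  set T' := (WithLp.linearEquiv 2 𝕜 (X → 𝕜)).symm.conj T
  have hT' : ∀ f, T' (toLp 2 f) = toLp 2 (T f) := fun _ => rfl
  have h := sq_mul_sub_norm_inner_sq_le_of_gap (u := (toLp 2 u : EuclideanSpace 𝕜 X))
    (by simp [EuclideanSpace.norm_eq, hu]) (by rw [hT', hTu]) hδ
    (fun η hη => by
      simpa [hT', EuclideanSpace.norm_eq] using
        hgap (ofLp η) (by rwa [← EuclideanSpace.inner_toLp_toLp_eq_sum])) (toLp 2 ξ)
  simpa [EuclideanSpace.norm_sq_eq, EuclideanSpace.inner_toLp_toLp_eq_sum, hT'] using h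

end Coordinates

theorem stmt_14_general {X : Type*} [Fintype X] [Nonempty X]
    (ξ0 : X → ℂ) (hξ0 : ∀ x, ξ0 x = ((Real.sqrt (Fintype.card X))⁻¹ : ℂ))
    (T : (X → ℂ) →ₗ[ℂ] (X → ℂ)) (hT : T ξ0 = ξ0)
    (δ : ℝ) (hδ : 0 < δ)
    (hgap : ∀ η : X → ℂ, (∑ x, (starRingEnd ℂ) (ξ0 x) * η x) = 0 →
      δ * Real.sqrt (∑ x, ‖η x‖ ^ 2) ≤
        Real.sqrt (∑ x, ‖(T η) x - η x‖ ^ 2))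
    (ξ : X → ℂ) (hnorm : ∑ x, ‖ξ x‖ ^ 2 = 1)
    (m : ℕ) (hsupp : (Function.support ξ).ncard ≤ m)
    (ε : ℝ)
    (happrox : Real.sqrt (∑ x, ‖(T ξ) x - ξ x‖ ^ 2) < ε) :
    (1 - ε ^ 2 / δ ^ 2) * (Fintype.card X : ℝ) < (m : ℝ) := by
  have hn : (0 : ℝ) < Fintype.card X := by exact_mod_cast Fintype.card_pos
  have hnormξ0 : ∀ x, ‖ξ0 x‖ = (√(Fintype.card X))⁻¹ := fun x => by
    rw [hξ0 x, ← Complex.ofReal_inv, Complex.norm_real, Real.norm_of_nonneg (by positivity)]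
  have hdefect := sq_mul_sub_norm_sum_conj_mul_sq_le_of_gap
    (by simp [hnormξ0, Real.sq_sqrt hn.le, hn.ne']) hT hδ.le hgap ξ
  rw [hnorm] at hdefect
  set c := ∑ x, conj (ξ0 x) * ξ x
  have hlt : 1 - ε ^ 2 / δ ^ 2 < ‖c‖ ^ 2 := by
    have hsq := pow_lt_pow_left₀ happrox (Real.sqrt_nonneg _) two_ne_zero
    rw [Real.sq_sqrt (by positivity)] at hsq
    rw [sub_lt_comm, lt_div_iff₀ (by positivity)]
    linarith
  have hcs := norm_sum_conj_mul_sq_le (g := ξ) fun x => (hnormξ0 x).le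
  rw [hnorm, inv_pow, Real.sq_sqrt hn.le, mul_one] at hcs
  calc (1 - ε ^ 2 / δ ^ 2) * Fintype.card X < ‖c‖ ^ 2 * Fintype.card X := by gcongr
    _ ≤ (Fintype.card X : ℝ)⁻¹ * (Function.support ξ).ncard * Fintype.card X := by gcongr
    _ = (Function.support ξ).ncard := by field_simp
    _ ≤ m := by exact_mod_cast hsupp

/-- Let ξ⁰ be the normalized constant function on a nonempty
finite set X, T a linear map fixing ξ⁰ with spectral gap δ on the orthogonal
complement of ξ⁰. If ‖ξ‖ = 1, |supp ξ| ≤ m and ‖Tξ − ξ‖ < ε ≤ δ, then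
m > (1 − ε²/δ²)·|X|. -/
theorem stmt_14 {X : Type*} [Fintype X] [Nonempty X]
    (ξ0 : X → ℂ) (hξ0 : ∀ x, ξ0 x = ((Real.sqrt (Fintype.card X))⁻¹ : ℂ))
    (T : (X → ℂ) →ₗ[ℂ] (X → ℂ)) (hT : T ξ0 = ξ0)
    (δ : ℝ) (hδ : 0 < δ)
    (hgap : ∀ η : X → ℂ, (∑ x, (starRingEnd ℂ) (ξ0 x) * η x) = 0 →
      δ * Real.sqrt (∑ x, ‖η x‖ ^ 2) ≤
        Real.sqrt (∑ x, ‖(T η) x - η x‖ ^ 2))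
    (ξ : X → ℂ) (hnorm : ∑ x, ‖ξ x‖ ^ 2 = 1)
    (m : ℕ) (hsupp : (Function.support ξ).ncard ≤ m)
    (ε : ℝ) (hε0 : 0 < ε) (hεδ : ε ≤ δ)
    (happrox : Real.sqrt (∑ x, ‖(T ξ) x - ξ x‖ ^ 2) < ε) :
    (1 - ε ^ 2 / δ ^ 2) * (Fintype.card X : ℝ) < (m : ℝ) :=
  stmt_14_general ξ0 hξ0 T hT δ hδ hgap ξ hnorm m hsupp ε happrox
end

section
/- Let F be the free group on two generators. Define a sequence of subgroups of F by G_0 = F (the whole group, as a subgroup) and G_{n+1} = the subgroup of F generated by {g² : g ∈ G_n}. Then for every n, G_n is a normal subgroup of F of finite index. -/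
/-!
Each `G (n + 1)` is generated by a conjugation-invariant set, the squares of the normal subgroup
`G n`, so it is normal. The quotient `G n ⧸ G (n + 1)` has exponent two, hence is abelian; it is
finitely generated because `G n` has finite index in the finitely generated group `F` (Schreier).
A finitely generated abelian torsion group is finite, so the index stays finite.
-/

theorem Group.finite_of_forall_sq_eq_one {Q : Type*} [Group Q] [Group.FG Q]
    (h : ∀ q : Q, q ^ 2 = 1) : Finite Q :=
  letI : CommGroup Q :=
    { mul_comm := fun a b =>
        (Commute.of_orderOf_dvd_two (fun g => orderOf_dvd_of_pow_eq_one (h g)) a b).eq }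
  CommGroup.finite_of_fg_isMulTorsion Q fun q => isOfFinOrder_iff_pow_eq_one.mpr ⟨2, two_pos, h q⟩

namespace Subgroup

variable {G : Type*} [Group G]

def powClosure (H : Subgroup G) (n : ℕ) : Subgroup G :=
  closure {x | ∃ g ∈ H, x = g ^ n}

variable (H : Subgroup G) (n : ℕ)

theorem powClosure_le : H.powClosure n ≤ H :=
  closure_le _ |>.mpr fun _ ⟨_, hg, hx⟩ => hx ▸ pow_mem hg n

instance powClosure_normal [H.Normal] : (H.powClosure n).Normal := by
  refine ⟨fun x hx c => ?_⟩
  have hconj : (H.powClosure n).map (MulAut.conj c).toMonoidHom ≤ H.powClosure n := by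
    rw [powClosure, MonoidHom.map_closure, closure_le]
    rintro _ ⟨_, ⟨g, hg, rfl⟩, rfl⟩
    exact subset_closure ⟨c * g * c⁻¹, Normal.conj_mem ‹_› g hg c, by simp [conj_pow]⟩
  exact hconj ⟨x, hx, rfl⟩

variable [Group.FG G]

theorem finiteIndex_of_forall_sq_mem (K : Subgroup G) [K.Normal] (h : ∀ g : G, g ^ 2 ∈ K) :
    K.FiniteIndex := by
  have : Finite (G ⧸ K) := Group.finite_of_forall_sq_eq_one fun q =>
    QuotientGroup.induction_on q fun g => (QuotientGroup.eq_one_iff _).mpr (h g)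
  exact finiteIndex_of_finite_quotient

instance powClosure_two_finiteIndex [H.Normal] [H.FiniteIndex] :
    (H.powClosure 2).FiniteIndex := by
  have : Group.FG H := fg_of_index_ne_zero H
  have : ((H.powClosure 2).subgroupOf H).FiniteIndex :=
    finiteIndex_of_forall_sq_mem _ fun g => subset_closure ⟨g, g.2, rfl⟩
  rw [finiteIndex_iff, ← relIndex_mul_index (powClosure_le H 2)]
  exact mul_ne_zero this.index_ne_zero FiniteIndex.index_ne_zero

end Subgroup

/-- For the free group F on two generators, the iterated subgroups
generated by squares, G_0 = F and G_{n+1} = ⟨{g² : g ∈ G_n}⟩, are all normal of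
finite index in F. -/
theorem stmt_15 (G : ℕ → Subgroup (FreeGroup (Fin 2))) (hG0 : G 0 = ⊤)
    (hGs : ∀ n, G (n + 1) = Subgroup.closure {x : FreeGroup (Fin 2) | ∃ g ∈ G n, x = g ^ 2}) :
    ∀ n, (G n).Normal ∧ (G n).FiniteIndex := by
  intro n
  induction n with
  | zero => rw [hG0]; exact ⟨inferInstance, inferInstance⟩
  | succ n ih =>
    obtain ⟨_, _⟩ := ih
    rw [hGs n]
    exact ⟨(G n).powClosure_normal 2, (G n).powClosure_two_finiteIndex⟩
end

section
/- Let F be the free group on two generators a, b. Define subgroups G_0 = F and G_{n+1} = the subgroup of F generated by {g² : g ∈ G_n}; each G_n is normal of finite index in F. Let X_n = F/G_n be the finite quotient group, on which F acts by left multiplication. Then there exists a sequence of nonempty subsets A_n ⊆ X_n such that: (i) |A_n| → ∞ as n → ∞; (ii) |A_n|/|X_n| → 0 as n → ∞; and (iii) for each s ∈ {a, b}, |(s·A_n) Δ A_n|/|A_n| → 0 as n → ∞, where s·A = {s·x : x ∈ A} and Δ denotes symmetric difference. -/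
/-!
Each `G (n+1)` is normal in `F` and `G n / G (n+1)` is a finitely generated group of exponent two,
hence a finite abelian group; so every `G n` has finite index. The abelianization `F → ℤ²` maps
`G n` into `2ⁿℤ²`, so `F / G n` surjects onto `(ℤ/2ⁿ)²`. Pull back the box `[0, L)²` with
`L = 2 ^ (n / 2)`: all fibres of a surjective homomorphism have the size of its kernel, so the
preimage has the same density and boundary ratios as the box, which has `L²` elements,
density `L² / 4ⁿ ≤ 1 / L`, and is moved by each generator on at most `2L` points.
-/

open Filter Subgroup Pointwise
open scoped symmDiff

theorem Group.finite_of_fg_of_forall_sq_eq_one {G : Type*} [Group G] [Group.FG G]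
    (h : ∀ x : G, x ^ 2 = 1) : Finite G :=
  letI : CommGroup G :=
    { mul_comm := Commute.of_orderOf_dvd_two fun g => orderOf_dvd_of_pow_eq_one (h g) }
  CommGroup.finite_of_fg_isMulTorsion G fun g =>
    isOfFinOrder_iff_pow_eq_one.2 ⟨2, two_pos, h g⟩

namespace Subgroup

variable {G : Type*} [Group G]

theorem normal_closure_of_conj_mem {s : Set G} (h : ∀ x ∈ s, ∀ c : G, c * x * c⁻¹ ∈ s) :
    (closure s).Normal := by
  have hs : Group.conjugatesOfSet s ⊆ s := fun x hx => by
    obtain ⟨a, ha, hax⟩ := Group.mem_conjugatesOfSet_iff.1 hx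
    obtain ⟨c, rfl⟩ := isConj_iff.1 hax
    exact h a ha c
  rw [le_antisymm closure_le_normalClosure (closure_mono hs)]
  infer_instance

def closureSquares (H : Subgroup G) : Subgroup G :=
  closure {x | ∃ g ∈ H, x = g ^ 2}

theorem closureSquares_le (H : Subgroup G) : H.closureSquares ≤ H :=
  closure_le _ |>.2 fun _ ⟨_, hg, hx⟩ => hx ▸ pow_mem hg 2

theorem Normal.closureSquares {H : Subgroup G} (hH : H.Normal) : H.closureSquares.Normal :=
  normal_closure_of_conj_mem fun _ ⟨g, hg, hx⟩ c =>
    ⟨c * g * c⁻¹, hH.conj_mem g hg c, by rw [hx, conj_pow]⟩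

theorem sq_mem_closureSquares {H : Subgroup G} {g : G} (hg : g ∈ H) :
    g ^ 2 ∈ H.closureSquares :=
  subset_closure ⟨g, hg, rfl⟩

theorem finiteIndex_closureSquares [Group.FG G] (H : Subgroup G) [hH : H.Normal]
    [H.FiniteIndex] : H.closureSquares.FiniteIndex := by
  set K := H.closureSquares.subgroupOf H
  have : K.Normal := hH.closureSquares.subgroupOf H
  have : Finite (H ⧸ K) := Group.finite_of_fg_of_forall_sq_eq_one fun x => by
    induction x using QuotientGroup.induction_on with
    | H h =>
      rw [← QuotientGroup.mk_pow, QuotientGroup.eq_one_iff, mem_subgroupOf]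
      exact sq_mem_closureSquares h.2
  have : K.FiniteIndex := finiteIndex_of_finite_quotient
  refine ⟨?_⟩
  rw [← relIndex_mul_index H.closureSquares_le]
  exact mul_ne_zero this.index_ne_zero FiniteIndex.index_ne_zero

variable (G) in
def squareSeries : ℕ → Subgroup G
  | 0 => ⊤
  | n + 1 => (squareSeries n).closureSquares

instance squareSeries_normal (n : ℕ) : (squareSeries G n).Normal := by
  induction n with
  | zero => exact inferInstanceAs (⊤ : Subgroup G).Normal
  | succ n ih => exact ih.closureSquares

instance squareSeries_finiteIndex [Group.FG G] (n : ℕ) : (squareSeries G n).FiniteIndex := by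
  induction n with
  | zero => exact inferInstanceAs (⊤ : Subgroup G).FiniteIndex
  | succ n ih => exact finiteIndex_closureSquares _

theorem squareSeries_le_comap_range_powMonoidHom {M : Type*} [CommGroup M] (f : G →* M)
    (n : ℕ) : squareSeries G n ≤ (powMonoidHom (2 ^ n)).range.comap f := by
  induction n with
  | zero => exact fun g _ => ⟨f g, pow_one _⟩
  | succ n ih =>
    refine closure_le _ |>.2 fun _ ⟨g, hg, hx⟩ => ?_
    obtain ⟨m, hm⟩ := ih hg
    refine ⟨m, ?_⟩
    rw [hx, map_pow, ← hm, powMonoidHom_apply, powMonoidHom_apply, pow_succ, pow_mul]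

theorem squareSeries_le_ker {M : Type*} [CommGroup M] (f : G →* M) {n : ℕ}
    (hM : ∀ m : M, m ^ 2 ^ n = 1) : squareSeries G n ≤ f.ker := fun g hg => by
  obtain ⟨m, hm⟩ := squareSeries_le_comap_range_powMonoidHom f n hg
  rw [MonoidHom.mem_ker, ← hm, powMonoidHom_apply, hM]

end Subgroup

theorem Set.image_symmDiff_subset {α β : Type*} (f : α → β) (s t : Set α) :
    (f '' s) ∆ (f '' t) ⊆ f '' (s ∆ t) := by
  rintro _ (⟨⟨a, ha, rfl⟩, hn⟩ | ⟨⟨a, ha, rfl⟩, hn⟩)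
  · exact ⟨a, Or.inl ⟨ha, fun h => hn ⟨a, h, rfl⟩⟩, rfl⟩
  · exact ⟨a, Or.inr ⟨ha, fun h => hn ⟨a, h, rfl⟩⟩, rfl⟩

theorem Set.symmDiff_prod {α β : Type*} (s₁ s₂ : Set α) (t : Set β) :
    (s₁ ∆ s₂) ×ˢ t = (s₁ ×ˢ t) ∆ (s₂ ×ˢ t) := by
  ext; simp only [Set.mem_prod, Set.mem_symmDiff]; tauto

theorem Set.prod_symmDiff {α β : Type*} (s : Set α) (t₁ t₂ : Set β) :
    s ×ˢ (t₁ ∆ t₂) = (s ×ˢ t₁) ∆ (s ×ˢ t₂) := by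
  ext; simp only [Set.mem_prod, Set.mem_symmDiff]; tauto

section Boxes

variable {T : Type*} [Group T]

def initialPowers (g : T) (L : ℕ) : Set T := (g ^ ·) '' Set.Iio L

theorem ncard_initialPowers {g : T} {L : ℕ} (hL : L ≤ orderOf g) :
    (initialPowers g L).ncard = L := by
  rw [initialPowers, (pow_injOn_Iio_orderOf.mono (Set.Iio_subset_Iio hL)).ncard_image,
    Set.ncard_Iio_nat]

theorem ncard_smul_initialPowers_symmDiff_le (g : T) (L : ℕ) :
    ((g • initialPowers g L) ∆ initialPowers g L).ncard ≤ 2 := by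
  have hshift : g • initialPowers g L = (g ^ ·) '' ((· + 1) '' Set.Iio L) := by
    simp only [initialPowers, ← Set.image_smul, Set.image_image, smul_eq_mul, pow_succ']
  have hboundary : ((· + 1) '' Set.Iio L) ∆ Set.Iio L ⊆ {0, L} := by
    intro k hk
    simp only [Set.mem_symmDiff, Set.mem_image, Set.mem_Iio] at hk
    simp only [Set.mem_insert_iff, Set.mem_singleton_iff]
    rcases hk with ⟨⟨j, hj, rfl⟩, hk⟩ | ⟨hk, hnot⟩
    · omega
    · by_contra! h
      exact hnot ⟨k - 1, by omega, by omega⟩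
  calc _ ≤ ((g ^ ·) '' {0, L}).ncard :=
        Set.ncard_le_ncard (hshift ▸ (Set.image_symmDiff_subset _ _ _).trans
          (Set.image_mono hboundary)) ((Set.toFinite _).image _)
    _ ≤ ({0, L} : Set ℕ).ncard := Set.ncard_image_le (Set.toFinite _)
    _ ≤ 2 := (Set.ncard_insert_le _ _).trans (by rw [Set.ncard_singleton])

def box (g : T) (L : ℕ) : Set (T × T) := initialPowers g L ×ˢ initialPowers g L

theorem ncard_box {g : T} {L : ℕ} (hL : L ≤ orderOf g) : (box g L).ncard = L * L := by
  rw [box, Set.ncard_prod, ncard_initialPowers hL]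

theorem Set.smul_set_prod_eq (u : T × T) (s t : Set T) :
    u • (s ×ˢ t) = (u.1 • s) ×ˢ (u.2 • t) := by
  ext ⟨x, y⟩
  simp [Set.mem_smul_set_iff_inv_smul_mem]

theorem ncard_smul_box_symmDiff_le {g : T} {L : ℕ} (hL : L ≤ orderOf g) {u : T × T}
    (hu : u = (g, 1) ∨ u = (1, g)) : ((u • box g L) ∆ box g L).ncard ≤ 2 * L := by
  rcases hu with rfl | rfl
  · rw [box, Set.smul_set_prod_eq, one_smul, ← Set.symmDiff_prod, Set.ncard_prod,
      ncard_initialPowers hL]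
    exact Nat.mul_le_mul_right _ (ncard_smul_initialPowers_symmDiff_le g L)
  · rw [box, Set.smul_set_prod_eq, one_smul, ← Set.prod_symmDiff, Set.ncard_prod,
      ncard_initialPowers hL, mul_comm]
    exact Nat.mul_le_mul_right _ (ncard_smul_initialPowers_symmDiff_le g L)

end Boxes

namespace MonoidHom

variable {X T : Type*} [Group X] [Group T] (π : X →* T)

theorem ncard_preimage_of_surjective (hπ : Function.Surjective π) (B : Set T) :
    (π ⁻¹' B).ncard = Nat.card π.ker * B.ncard := by
  let e := QuotientGroup.quotientKerEquivOfSurjective π hπ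
  have hπe : π ⁻¹' B = QuotientGroup.mk ⁻¹' (e ⁻¹' B) := rfl
  rw [hπe, ← Nat.card_coe_set_eq, QuotientGroup.card_preimage_mk, Nat.card_coe_set_eq,
    Set.ncard_preimage_of_injective_subset_range e.injective (by simp [e.surjective.range_eq])]

theorem smul_preimage (u : X) (B : Set T) : u • π ⁻¹' B = π ⁻¹' (π u • B) := by
  ext x
  simp [Set.mem_smul_set_iff_inv_smul_mem]

variable [Finite X] {π}

theorem ncard_preimage_div_card (hπ : Function.Surjective π) (B : Set T) :
    ((π ⁻¹' B).ncard : ℝ) / Nat.card X = B.ncard / Nat.card T := by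
  have hker : (Nat.card π.ker : ℝ) ≠ 0 := Nat.cast_ne_zero.2 Nat.card_pos.ne'
  rw [← Set.ncard_univ X, ← Set.preimage_univ (f := π), ncard_preimage_of_surjective π hπ,
    ncard_preimage_of_surjective π hπ, Set.ncard_univ]
  push_cast
  exact mul_div_mul_left _ _ hker

theorem ncard_smul_preimage_symmDiff_div (hπ : Function.Surjective π) (u : X) (B : Set T) :
    (((u • π ⁻¹' B) ∆ (π ⁻¹' B)).ncard : ℝ) / (π ⁻¹' B).ncard
      = ((π u • B) ∆ B).ncard / B.ncard := by
  have hker : (Nat.card π.ker : ℝ) ≠ 0 := Nat.cast_ne_zero.2 Nat.card_pos.ne'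
  rw [smul_preimage, ← Set.preimage_symmDiff, ncard_preimage_of_surjective π hπ,
    ncard_preimage_of_surjective π hπ]
  push_cast
  exact mul_div_mul_left _ _ hker

end MonoidHom

open Multiplicative

noncomputable def abelianizationMod (N : ℕ) :
    FreeGroup (Fin 2) →* Multiplicative (ZMod N) × Multiplicative (ZMod N) :=
  FreeGroup.lift ![(ofAdd 1, 1), (1, ofAdd 1)]

theorem abelianizationMod_of_zero (N : ℕ) :
    abelianizationMod N (FreeGroup.of 0) = (ofAdd 1, 1) := by
  simp [abelianizationMod]

theorem abelianizationMod_of_one (N : ℕ) :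
    abelianizationMod N (FreeGroup.of 1) = (1, ofAdd 1) := by
  simp [abelianizationMod]

theorem ofAdd_one_pow_val {N : ℕ} [NeZero N] (x : Multiplicative (ZMod N)) :
    ofAdd (1 : ZMod N) ^ (toAdd x).val = x := by
  rw [← ofAdd_nsmul, nsmul_one, ZMod.natCast_zmod_val, ofAdd_toAdd]

theorem abelianizationMod_surjective (N : ℕ) [NeZero N] :
    Function.Surjective (abelianizationMod N) := by
  rintro ⟨x, y⟩
  refine ⟨FreeGroup.of 0 ^ (toAdd x).val * FreeGroup.of 1 ^ (toAdd y).val, ?_⟩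
  simp [abelianizationMod_of_zero, abelianizationMod_of_one, ofAdd_one_pow_val]

theorem prod_multiplicative_zmod_pow_eq_one (N : ℕ)
    (m : Multiplicative (ZMod N) × Multiplicative (ZMod N)) : m ^ N = 1 := by
  have hpow (x : Multiplicative (ZMod N)) : x ^ N = 1 := by
    have := pow_card_eq_one' (x := x)
    rwa [Nat.card_congr toAdd, Nat.card_zmod] at this
  exact Prod.ext (hpow m.1) (hpow m.2)

theorem orderOf_ofAdd_one (N : ℕ) : orderOf (ofAdd (1 : ZMod N)) = N := by
  rw [orderOf_ofAdd_eq_addOrderOf, ZMod.addOrderOf_one]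

section FolnerSets

local notation "F₂" => FreeGroup (Fin 2)

noncomputable def quotientSquareSeriesToZMod (n : ℕ) :
    F₂ ⧸ squareSeries F₂ n →*
      Multiplicative (ZMod (2 ^ n)) × Multiplicative (ZMod (2 ^ n)) :=
  QuotientGroup.lift _ (abelianizationMod (2 ^ n))
    (squareSeries_le_ker _ (prod_multiplicative_zmod_pow_eq_one _))

theorem quotientSquareSeriesToZMod_surjective (n : ℕ) :
    Function.Surjective (quotientSquareSeriesToZMod n) :=
  QuotientGroup.lift_surjective_of_surjective _ _ (abelianizationMod_surjective _) _

def folnerSet (n : ℕ) : Set (F₂ ⧸ squareSeries F₂ n) :=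
  quotientSquareSeriesToZMod n ⁻¹' box (ofAdd 1) (2 ^ (n / 2))

theorem two_pow_half_le_orderOf (n : ℕ) :
    2 ^ (n / 2) ≤ orderOf (ofAdd (1 : ZMod (2 ^ n))) := by
  rw [orderOf_ofAdd_one]; exact Nat.pow_le_pow_right two_pos (Nat.div_le_self n 2)

theorem one_mem_folnerSet (n : ℕ) : 1 ∈ folnerSet n := by
  rw [folnerSet, Set.mem_preimage, map_one (quotientSquareSeriesToZMod n)]
  exact ⟨⟨0, Nat.two_pow_pos _, pow_zero _⟩, ⟨0, Nat.two_pow_pos _, pow_zero _⟩⟩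

theorem two_pow_half_le_ncard_folnerSet (n : ℕ) : 2 ^ (n / 2) ≤ (folnerSet n).ncard := by
  rw [folnerSet,
    MonoidHom.ncard_preimage_of_surjective _ (quotientSquareSeriesToZMod_surjective n),
    ncard_box (two_pow_half_le_orderOf n)]
  exact (Nat.le_mul_of_pos_right _ (Nat.two_pow_pos _)).trans
    (Nat.le_mul_of_pos_left _ Nat.card_pos)

theorem ncard_folnerSet_div_card_le (n : ℕ) :
    ((folnerSet n).ncard : ℝ) / Nat.card (F₂ ⧸ squareSeries F₂ n) ≤ 1 / 2 ^ (n / 2) := by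
  rw [folnerSet, MonoidHom.ncard_preimage_div_card (quotientSquareSeriesToZMod_surjective n),
    ncard_box (two_pow_half_le_orderOf n), Nat.card_prod, Nat.card_congr toAdd, Nat.card_zmod]
  have hsq : 2 ^ (n / 2) * 2 ^ (n / 2) ≤ 2 ^ n := by
    rw [← pow_add]; exact Nat.pow_le_pow_right two_pos (by omega)
  have hcube : 2 ^ (n / 2) * 2 ^ (n / 2) * 2 ^ (n / 2) ≤ 2 ^ n * 2 ^ n :=
    Nat.mul_le_mul hsq (Nat.pow_le_pow_right two_pos (Nat.div_le_self n 2))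
  rw [div_le_div_iff₀ (by positivity) (by positivity), one_mul]
  exact_mod_cast hcube

theorem ncard_smul_folnerSet_symmDiff_div_le (n : ℕ) {s : F₂}
    (hs : s ∈ ({FreeGroup.of 0, FreeGroup.of 1} : Set F₂)) :
    (((s • folnerSet n) ∆ folnerSet n).ncard : ℝ) / (folnerSet n).ncard
      ≤ 2 / 2 ^ (n / 2) := by
  have hsmul : s • folnerSet n = (s : F₂ ⧸ squareSeries F₂ n) • folnerSet n := rfl
  have hgen : quotientSquareSeriesToZMod n s = (ofAdd 1, 1) ∨
      quotientSquareSeriesToZMod n s = (1, ofAdd 1) := by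
    rcases hs with rfl | rfl
    · exact Or.inl (abelianizationMod_of_zero _)
    · exact Or.inr (abelianizationMod_of_one _)
  have hboundary := Nat.mul_le_mul_right (2 ^ (n / 2))
    (ncard_smul_box_symmDiff_le (two_pow_half_le_orderOf n) hgen)
  rw [hsmul, folnerSet,
    MonoidHom.ncard_smul_preimage_symmDiff_div (quotientSquareSeriesToZMod_surjective n),
    ncard_box (two_pow_half_le_orderOf n), div_le_div_iff₀ (by positivity) (by positivity)]
  rw [mul_assoc] at hboundary
  exact_mod_cast hboundary

end FolnerSets

/-- For the free group F on two generators a, b and the iterated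
square subgroups G_n (normal of finite index), there are nonempty sets
A_n ⊆ F/G_n with |A_n| → ∞, |A_n|/|X_n| → 0, and |(s·A_n) Δ A_n|/|A_n| → 0
for s ∈ {a, b}. -/
theorem stmt_17 (a b : FreeGroup (Fin 2))
    (ha : a = FreeGroup.of 0) (hb : b = FreeGroup.of 1)
    (G : ℕ → Subgroup (FreeGroup (Fin 2))) (hG0 : G 0 = ⊤)
    (hGs : ∀ n, G (n + 1) = Subgroup.closure
      {x : FreeGroup (Fin 2) | ∃ g ∈ G n, x = g ^ 2}) :
    (∀ n, (G n).Normal ∧ (G n).FiniteIndex) ∧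
    ∃ A : ∀ n : ℕ, Set (FreeGroup (Fin 2) ⧸ G n),
      (∀ n, (A n).Nonempty) ∧
      Tendsto (fun n => (A n).ncard) atTop atTop ∧
      Tendsto (fun n => ((A n).ncard : ℝ) / (Nat.card (FreeGroup (Fin 2) ⧸ G n) : ℝ))
        atTop (nhds 0) ∧
      (∀ s ∈ ({a, b} : Set (FreeGroup (Fin 2))),
        Tendsto (fun n =>
            ((symmDiff ((fun x => s • x) '' A n) (A n)).ncard : ℝ) / ((A n).ncard : ℝ))
          atTop (nhds 0)) := by
  subst ha hb
  obtain rfl : G = squareSeries (FreeGroup (Fin 2)) := funext fun n => by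
    induction n with
    | zero => exact hG0
    | succ n ih => rw [hGs, ih]; rfl
  have hL : Tendsto (fun n : ℕ => 2 ^ (n / 2)) atTop atTop :=
    (tendsto_pow_atTop_atTop_of_one_lt one_lt_two).comp
      (Nat.tendsto_div_const_atTop two_ne_zero)
  have hlim (c : ℝ) : Tendsto (fun n : ℕ => c / 2 ^ (n / 2)) atTop (nhds 0) := by
    simpa [Function.comp_def] using (tendsto_const_div_atTop_nhds_zero_nat c).comp hL
  refine ⟨fun n => ⟨inferInstance, inferInstance⟩, folnerSet,
    fun n => ⟨1, one_mem_folnerSet n⟩,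
    tendsto_atTop_mono two_pow_half_le_ncard_folnerSet hL,
    squeeze_zero (fun n => by positivity) ncard_folnerSet_div_card_le (hlim 1),
    fun s hs => squeeze_zero (fun n => by positivity) (fun n => ?_) (hlim 2)⟩
  rw [Set.image_smul]
  exact ncard_smul_folnerSet_symmDiff_div_le n hs
end
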